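/- arXiv:0903.4514 — 3 statements merged into one kernel-verified Lean document; each statement's English description precedes it below -/
import Mathlib

section
/- Let R be a ring and let 0 → M₃ → M₂ → M₁ → 0 be a short exact sequence of left R-modules with M₃ ≠ 0. If M₁ is Gorenstein projective, then the Gorenstein projective dimensions of M₃ and M₂ are equal: Gpd_R(M₃) = Gpd_R(M₂). -/
universe u

open LinearMap

section GorensteinDefs

variable (S : Type u) [Ring S]

/-- A complete projective resolution: a doubly infinite exact sequence of projective
`S`-modules which stays exact after applying `Hom_S(-, Q)` for every projective module `Q`,
together with an identification of `G` with the image of the 0-th differential. -/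
structure CompleteProjectiveResolution (G : Type u) [AddCommGroup G] [Module S G] where
  P : ℤ → Type u
  [acg : ∀ i, AddCommGroup (P i)]
  [mod : ∀ i, Module S (P i)]
  projective : ∀ i, Module.Projective S (P i)
  d : ∀ i, P i →ₗ[S] P (i + 1)
  exact : ∀ i, LinearMap.range (d i) = LinearMap.ker (d (i + 1))
  homExact : ∀ (Q : Type u) [AddCommGroup Q] [Module S Q], Module.Projective S Q →
      ∀ i (f : P (i + 1) →ₗ[S] Q), f.comp (d i) = 0 →
        ∃ g : P (i + 1 + 1) →ₗ[S] Q, g.comp (d (i + 1)) = f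
  equiv : Nonempty (G ≃ₗ[S] LinearMap.range (d 0))

attribute [instance] CompleteProjectiveResolution.acg CompleteProjectiveResolution.mod

/-- A module is Gorenstein projective if it admits a complete projective resolution. -/
def IsGorensteinProjective (G : Type u) [AddCommGroup G] [Module S G] : Prop :=
  Nonempty (CompleteProjectiveResolution S G)

/-- An exact sequence `0 → G n → G (n-1) → ⋯ → G 1 → G 0 → M → 0` of `S`-modules,
encoded as an `ℕ`-indexed exact sequence whose entries in degrees `> n` are zero. -/
structure FiniteExactSequenceTo (M : Type u) [AddCommGroup M] [Module S M] (n : ℕ) where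
  G : ℕ → Type u
  [acg : ∀ i, AddCommGroup (G i)]
  [mod : ∀ i, Module S (G i)]
  d : ∀ i, G (i + 1) →ₗ[S] G i
  aug : G 0 →ₗ[S] M
  aug_surjective : Function.Surjective aug
  exact_aug : LinearMap.range (d 0) = LinearMap.ker aug
  exact : ∀ i, LinearMap.range (d (i + 1)) = LinearMap.ker (d i)
  trivial_of_gt : ∀ i, n < i → Subsingleton (G i)

attribute [instance] FiniteExactSequenceTo.acg FiniteExactSequenceTo.mod

/-- `M` admits an exact sequence `0 → G n → ⋯ → G 0 → M → 0` with all `G i`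
Gorenstein projective. -/
def GorensteinProjectiveDimensionLE (M : Type u) [AddCommGroup M] [Module S M] (n : ℕ) : Prop :=
  ∃ E : FiniteExactSequenceTo S M n, ∀ i ≤ n, IsGorensteinProjective S (E.G i)

/-- The Gorenstein projective dimension `Gpd_S(M)`, as an element of `ℕ∞`. -/
noncomputable def gpd (M : Type u) [AddCommGroup M] [Module S M] : ℕ∞ :=
  sInf {k : ℕ∞ | ∃ n : ℕ, k = n ∧ GorensteinProjectiveDimensionLE S M n}

/-- `M` admits an exact sequence `0 → P n → ⋯ → P 0 → M → 0` with all `P i` projective. -/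
def ProjectiveDimensionLE (M : Type u) [AddCommGroup M] [Module S M] (n : ℕ) : Prop :=
  ∃ E : FiniteExactSequenceTo S M n, ∀ i ≤ n, Module.Projective S (E.G i)

/-- The projective dimension `pd_S(M)`, as an element of `ℕ∞`. -/
noncomputable def pd (M : Type u) [AddCommGroup M] [Module S M] : ℕ∞ :=
  sInf {k : ℕ∞ | ∃ n : ℕ, k = n ∧ ProjectiveDimensionLE S M n}

end GorensteinDefs

/-!
A module is Gorenstein projective iff it lies in some class `𝒞` of modules `M` with
`Ext¹(M, projective) = 0` in which every member is both the image of a projective with kernel in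
`𝒞` and a submodule of a projective with cokernel in `𝒞`: splicing these presentations gives a
complete projective resolution, and conversely the images of a complete projective resolution form
such a class. Closure properties are then proved by exhibiting suitable classes: extensions via the
horseshoe lemma, summands with projective complement and kernels of epimorphisms via the 3×3 lemma.

For `0 → M₃ → M₂ → M₁ → 0` with `M₁` Gorenstein projective, the first step `G₀ → M₃` of a
Gorenstein projective resolution and a projective presentation `P → M₁` combine (horseshoe) to
`G₀ × P → M₂`, whose kernel is an extension of a Gorenstein projective by the kernel of `G₀ → M₃`;
so induction gives `Gpd M₂ ≤ Gpd M₃`. Conversely, if `G₀ → M₂` starts a resolution, the preimage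
of `M₃` in `G₀` is the kernel of the epimorphism `G₀ → M₁` of Gorenstein projectives, hence
Gorenstein projective, and it maps onto `M₃` with the same kernel as `G₀ → M₂`; so
`Gpd M₃ ≤ Gpd M₂`.
-/

universe v

open Function Submodule

/-! ### Short exact sequences and the 3×3 lemma -/

section ShortExact

variable {S : Type*} [Ring S]
variable {A B C : Type*} [AddCommGroup A] [Module S A] [AddCommGroup B] [Module S B]
  [AddCommGroup C] [Module S C]

theorem LinearMap.exists_comp_eq_of_range_le {f : B →ₗ[S] C} (hf : Injective f)
    {φ : A →ₗ[S] C} (h : range φ ≤ range f) : ∃ ψ : A →ₗ[S] B, f ∘ₗ ψ = φ := by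
  refine ⟨(LinearEquiv.ofInjective f hf).symm.toLinearMap ∘ₗ
    φ.codRestrict (range f) fun x => h (LinearMap.mem_range_self φ x), ?_⟩
  ext x
  simp [LinearEquiv.ofInjective_symm_apply]

theorem LinearMap.exists_comp_eq_of_ker_le {g : A →ₗ[S] B} (hg : Surjective g)
    {φ : A →ₗ[S] C} (h : ker g ≤ ker φ) : ∃ ψ : B →ₗ[S] C, ψ ∘ₗ g = φ :=
  ⟨(ker g).liftQ φ h ∘ₗ (g.quotKerEquivOfSurjective hg).symm.toLinearMap, by
    ext x
    simp [LinearMap.quotKerEquivOfSurjective_symm_apply]⟩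

structure IsShortExact (f : A →ₗ[S] B) (g : B →ₗ[S] C) : Prop where
  injective : Injective f
  surjective : Surjective g
  exact : Exact f g

namespace IsShortExact

theorem inl_snd : IsShortExact (LinearMap.inl S A C) (LinearMap.snd S A C) :=
  ⟨LinearMap.inl_injective, LinearMap.snd_surjective, Exact.inl_snd⟩

theorem inr_fst : IsShortExact (LinearMap.inr S A C) (LinearMap.fst S A C) :=
  ⟨LinearMap.inr_injective, LinearMap.fst_surjective, Exact.inr_fst⟩

theorem subtype_ker {g : B →ₗ[S] C} (hg : Surjective g) : IsShortExact (ker g).subtype g :=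
  ⟨Subtype.val_injective, hg, LinearMap.exact_subtype_ker_map g⟩

theorem mkQ_range {f : A →ₗ[S] B} (hf : Injective f) : IsShortExact f (range f).mkQ :=
  ⟨hf, (range f).mkQ_surjective, LinearMap.exact_map_mkQ_range f⟩

theorem id_zero : IsShortExact (LinearMap.id : A →ₗ[S] A) (0 : A →ₗ[S] PUnit.{v + 1}) :=
  ⟨injective_id, fun _ => ⟨0, rfl⟩, fun x => by simp⟩

theorem zero_id : IsShortExact (0 : PUnit.{v + 1} →ₗ[S] A) LinearMap.id :=
  ⟨fun _ _ _ => rfl, surjective_id, fun x => by simp [eq_comm]⟩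

theorem nonempty_linearEquiv_prod [Module.Projective S C] {f : A →ₗ[S] B} {g : B →ₗ[S] C}
    (hfg : IsShortExact f g) : Nonempty (B ≃ₗ[S] A × C) :=
  let ⟨s, hs⟩ := Module.projective_lifting_property g LinearMap.id hfg.surjective
  ⟨(hfg.exact.splitSurjectiveEquiv hfg.injective ⟨s, hs⟩).1⟩

end IsShortExact

end ShortExact

section NineLemma

variable {S : Type*} [Ring S]
variable {X₁ X₂ X₃ Y₁ Y₂ Y₃ K₁ K₃ : Type*}
  [AddCommGroup X₁] [Module S X₁] [AddCommGroup X₂] [Module S X₂] [AddCommGroup X₃] [Module S X₃]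
  [AddCommGroup Y₁] [Module S Y₁] [AddCommGroup Y₂] [Module S Y₂] [AddCommGroup Y₃] [Module S Y₃]
  [AddCommGroup K₁] [Module S K₁] [AddCommGroup K₃] [Module S K₃]
variable {f : X₁ →ₗ[S] X₂} {g : X₂ →ₗ[S] X₃} {f' : Y₁ →ₗ[S] Y₂} {g' : Y₂ →ₗ[S] Y₃}
  {α : X₁ →ₗ[S] Y₁} {β : X₂ →ₗ[S] Y₂} {γ : X₃ →ₗ[S] Y₃}

/-- The 3×3 lemma, kernel version. -/
theorem IsShortExact.exists_isShortExact_ker (hX : IsShortExact f g) (hY : IsShortExact f' g')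
    (comm₁ : β ∘ₗ f = f' ∘ₗ α) (comm₂ : γ ∘ₗ g = g' ∘ₗ β)
    {κ₁ : K₁ →ₗ[S] X₁} {κ₃ : K₃ →ₗ[S] X₃} (hα : IsShortExact κ₁ α) (hγ : IsShortExact κ₃ γ) :
    Surjective β ∧ ∃ (k : K₁ →ₗ[S] ker β) (k' : ker β →ₗ[S] K₃),
      IsShortExact k k' ∧ (ker β).subtype ∘ₗ k = f ∘ₗ κ₁ := by
  have comm₁' (x) : β (f x) = f' (α x) := LinearMap.congr_fun comm₁ x
  have comm₂' (x) : γ (g x) = g' (β x) := LinearMap.congr_fun comm₂ x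
  refine ⟨fun y => ?_, ?_⟩
  · obtain ⟨x, hx⟩ := hγ.surjective.comp hX.surjective (g' y)
    obtain ⟨y₁, hy₁⟩ := (hY.exact (y - β x)).1 (by simp [← comm₂', hx.symm])
    obtain ⟨x₁, rfl⟩ := hα.surjective y₁
    exact ⟨x + f x₁, by rw [map_add, comm₁', hy₁, add_sub_cancel]⟩
  have hk (z : K₁) : f (κ₁ z) ∈ ker β := by
    simp [comm₁', hα.exact.apply_apply_eq_zero]
  have hk' : range (g ∘ₗ (ker β).subtype) ≤ range κ₃ := by
    rintro _ ⟨x, rfl⟩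
    exact (hγ.exact _).1 (by simp [comm₂'])
  obtain ⟨k', hk'⟩ := LinearMap.exists_comp_eq_of_range_le hγ.injective hk'
  have hk'x (x) : κ₃ (k' x) = g x := LinearMap.congr_fun hk' x
  refine ⟨(f ∘ₗ κ₁).codRestrict _ hk, k', ⟨?_, fun z => ?_, fun x => ?_⟩, rfl⟩
  · exact fun z z' h => hα.injective (hX.injective (congrArg Subtype.val h))
  · obtain ⟨x, hx⟩ := hX.surjective (κ₃ z)
    obtain ⟨y₁, hy₁⟩ := (hY.exact (β x)).1 (by simp [← comm₂', hx, hγ.exact.apply_apply_eq_zero])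
    obtain ⟨x₁, rfl⟩ := hα.surjective y₁
    refine ⟨⟨x - f x₁, by simp [comm₁', hy₁]⟩, hγ.injective ?_⟩
    simp [hk'x, hx, hX.exact.apply_apply_eq_zero]
  · rw [← hγ.injective.eq_iff, hk'x, map_zero]
    refine ⟨fun hx => ?_, ?_⟩
    · obtain ⟨x₁, hx₁⟩ := (hX.exact _).1 hx
      have : α x₁ = 0 := hY.injective (by rw [← comm₁', hx₁, map_zero]; exact x.2)
      obtain ⟨z, rfl⟩ := (hα.exact _).1 this
      exact ⟨z, Subtype.ext hx₁⟩
    · rintro ⟨z, rfl⟩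
      exact hX.exact.apply_apply_eq_zero _

end NineLemma

section NineLemmaDual

variable {S : Type*} [Ring S]
variable {X₁ X₂ X₃ Y₁ Y₂ Y₃ C₁ C₃ : Type*}
  [AddCommGroup X₁] [Module S X₁] [AddCommGroup X₂] [Module S X₂] [AddCommGroup X₃] [Module S X₃]
  [AddCommGroup Y₁] [Module S Y₁] [AddCommGroup Y₂] [Module S Y₂] [AddCommGroup Y₃] [Module S Y₃]
  [AddCommGroup C₁] [Module S C₁] [AddCommGroup C₃] [Module S C₃]
variable {f : X₁ →ₗ[S] X₂} {g : X₂ →ₗ[S] X₃} {f' : Y₁ →ₗ[S] Y₂} {g' : Y₂ →ₗ[S] Y₃}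
  {α : X₁ →ₗ[S] Y₁} {β : X₂ →ₗ[S] Y₂} {γ : X₃ →ₗ[S] Y₃}

theorem IsShortExact.exists_eq_of_apply_eq (hX : IsShortExact f g) (hY : IsShortExact f' g')
    (comm₁ : β ∘ₗ f = f' ∘ₗ α) (comm₂ : γ ∘ₗ g = g' ∘ₗ β) (hγ : Injective γ) {x : X₂} {y₁ : Y₁}
    (h : β x = f' y₁) : ∃ x₁, f x₁ = x ∧ α x₁ = y₁ := by
  have : γ (g x) = γ 0 := by
    rw [← LinearMap.comp_apply, comm₂, LinearMap.comp_apply, h, hY.exact.apply_apply_eq_zero,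
      map_zero]
  obtain ⟨x₁, rfl⟩ := (hX.exact x).1 (hγ this)
  refine ⟨x₁, rfl, hY.injective ?_⟩
  rw [← LinearMap.comp_apply f', ← comm₁, LinearMap.comp_apply, h]

/-- The 3×3 lemma, cokernel version. -/
theorem IsShortExact.exists_isShortExact_coker (hX : IsShortExact f g) (hY : IsShortExact f' g')
    (comm₁ : β ∘ₗ f = f' ∘ₗ α) (comm₂ : γ ∘ₗ g = g' ∘ₗ β)
    {q₁ : Y₁ →ₗ[S] C₁} {q₃ : Y₃ →ₗ[S] C₃} (hα : IsShortExact α q₁) (hγ : IsShortExact γ q₃) :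
    Injective β ∧ ∃ (k : C₁ →ₗ[S] Y₂ ⧸ range β) (k' : Y₂ ⧸ range β →ₗ[S] C₃),
      IsShortExact k k' := by
  have comm₂' (x) : γ (g x) = g' (β x) := LinearMap.congr_fun comm₂ x
  have chase {x : X₂} {y₁ : Y₁} (h : β x = f' y₁) :=
    hX.exists_eq_of_apply_eq hY comm₁ comm₂ hγ.injective h
  refine ⟨(injective_iff_map_eq_zero β).2 fun x hx => ?_, ?_⟩
  · obtain ⟨x₁, rfl, hx₁⟩ := chase (y₁ := 0) (by rw [hx, map_zero])
    rw [hα.injective (hx₁.trans (map_zero α).symm), map_zero]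
  have hk : ker q₁ ≤ ker ((range β).mkQ ∘ₗ f') := by
    rintro _ hy
    obtain ⟨x₁, rfl⟩ := (hα.exact _).1 hy
    simp [← LinearMap.comp_apply f', ← comm₁]
  obtain ⟨k, hk⟩ := LinearMap.exists_comp_eq_of_ker_le hα.surjective hk
  have hkx (y) : k (q₁ y) = (range β).mkQ (f' y) := LinearMap.congr_fun hk y
  have hk' : range β ≤ ker (q₃ ∘ₗ g') := by
    rintro _ ⟨x, rfl⟩
    simp [← comm₂', hγ.exact.apply_apply_eq_zero]
  refine ⟨k, (range β).liftQ _ hk', ⟨(injective_iff_map_eq_zero k).2 fun c hc => ?_,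
    surjective_range_liftQ _ (hγ.surjective.comp hY.surjective), fun y => ?_⟩⟩
  · obtain ⟨y₁, rfl⟩ := hα.surjective c
    rw [hkx, Submodule.mkQ_apply, Submodule.Quotient.mk_eq_zero] at hc
    obtain ⟨x, hx⟩ := hc
    obtain ⟨x₁, -, rfl⟩ := chase hx
    exact hα.exact.apply_apply_eq_zero x₁
  obtain ⟨y, rfl⟩ := (range β).mkQ_surjective y
  simp only [Submodule.mkQ_apply, Submodule.liftQ_apply, LinearMap.comp_apply]
  constructor
  · intro hy
    obtain ⟨x, hx⟩ := (hγ.exact _).1 hy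
    obtain ⟨x, rfl⟩ := hX.surjective x
    obtain ⟨y₁, hy₁⟩ := (hY.exact (y - β x)).1 (by rw [map_sub, ← comm₂', hx, sub_self])
    refine ⟨q₁ y₁, ?_⟩
    rw [hkx, Submodule.mkQ_apply, Submodule.Quotient.eq, hy₁, sub_sub_cancel_left]
    exact neg_mem (LinearMap.mem_range_self β x)
  · rintro ⟨c, hc⟩
    obtain ⟨y₁, rfl⟩ := hα.surjective c
    rw [hkx, Submodule.mkQ_apply, Submodule.Quotient.eq] at hc
    obtain ⟨x, hx⟩ := hc
    rw [show y = f' y₁ - β x by rw [hx, sub_sub_cancel]]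
    simp [← comm₂', hY.exact.apply_apply_eq_zero, hγ.exact.apply_apply_eq_zero]

end NineLemmaDual

section Composites

variable {S : Type*} [Ring S]
variable {N Y A B C P D : Type*} [AddCommGroup N] [Module S N] [AddCommGroup Y] [Module S Y]
  [AddCommGroup A] [Module S A] [AddCommGroup B] [Module S B] [AddCommGroup C] [Module S C]
  [AddCommGroup P] [Module S P] [AddCommGroup D] [Module S D]
variable {f : A →ₗ[S] B} {g : B →ₗ[S] C}

theorem IsShortExact.exists_isShortExact_ker_comp {a : N →ₗ[S] Y} {b : Y →ₗ[S] B}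
    (hab : IsShortExact a b) (hfg : IsShortExact f g) :
    ∃ (k : N →ₗ[S] ker (g ∘ₗ b)) (k' : ker (g ∘ₗ b) →ₗ[S] A),
      IsShortExact k k' ∧ (ker (g ∘ₗ b)).subtype ∘ₗ k = a := by
  have comm₁ : (g ∘ₗ b) ∘ₗ a = (0 : PUnit.{1} →ₗ[S] C) ∘ₗ (0 : N →ₗ[S] PUnit) := by
    ext x; simp [hab.exact.apply_apply_eq_zero]
  exact (hab.exists_isShortExact_ker IsShortExact.zero_id comm₁ rfl IsShortExact.id_zero hfg).2

theorem IsShortExact.exists_isShortExact_coker_comp {j : B →ₗ[S] P} {q : P →ₗ[S] D}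
    (hfg : IsShortExact f g) (hjq : IsShortExact j q) :
    ∃ (k : C →ₗ[S] P ⧸ range (j ∘ₗ f)) (k' : P ⧸ range (j ∘ₗ f) →ₗ[S] D), IsShortExact k k' := by
  have comm₂ : (0 : PUnit.{1} →ₗ[S] D) ∘ₗ (0 : A →ₗ[S] PUnit) = q ∘ₗ (j ∘ₗ f) := by
    ext x; simp [hjq.exact.apply_apply_eq_zero]
  exact (IsShortExact.id_zero.exists_isShortExact_coker (α := f) (β := j ∘ₗ f) hjq rfl comm₂ hfg
    IsShortExact.zero_id).2

end Composites

/-! ### Vanishing of `Ext¹` against projectives -/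

/-- `Ext¹(C, Q) = 0` for every projective `Q`, stated without derived functors: for every short
exact sequence `0 → N → Y → C → 0`, every map from `N` to a projective module extends to `Y`. -/
def ExtOneProjVanishes (S : Type u) [Ring S] (C : Type u) [AddCommGroup C] [Module S C] : Prop :=
  ∀ ⦃N Y : Type u⦄ [AddCommGroup N] [Module S N] [AddCommGroup Y] [Module S Y]
    ⦃a : N →ₗ[S] Y⦄ ⦃b : Y →ₗ[S] C⦄, IsShortExact a b →
    ∀ (Q : Type u) [AddCommGroup Q] [Module S Q] [Module.Projective S Q] (v : N →ₗ[S] Q),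
      ∃ w : Y →ₗ[S] Q, w ∘ₗ a = v

namespace ExtOneProjVanishes

variable {S : Type u} [Ring S]
variable {A B C K P : Type u} [AddCommGroup A] [Module S A] [AddCommGroup B] [Module S B]
  [AddCommGroup C] [Module S C] [AddCommGroup K] [Module S K] [AddCommGroup P] [Module S P]

theorem of_projective [Module.Projective S C] : ExtOneProjVanishes S C := by
  intro N Y _ _ _ _ a b hab Q _ _ _ v
  obtain ⟨s, hs⟩ := Module.projective_lifting_property b LinearMap.id hab.surjective
  obtain ⟨e, rfl, -⟩ := hab.exact.splitSurjectiveEquiv hab.injective ⟨s, hs⟩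
  exact ⟨v ∘ₗ LinearMap.fst S N C ∘ₗ e.toLinearMap, by ext; simp⟩

theorem of_linearEquiv (h : ExtOneProjVanishes S B) (e : B ≃ₗ[S] C) :
    ExtOneProjVanishes S C := by
  intro N Y _ _ _ _ a b hab
  exact h (show IsShortExact a (e.symm.toLinearMap ∘ₗ b) from ⟨hab.injective,
    e.symm.surjective.comp hab.surjective, LinearEquiv.postcomp_exact_iff_exact.2 hab.exact⟩)

theorem of_isShortExact_of_projective [Module.Projective S P] {ι : K →ₗ[S] P} {π : P →ₗ[S] C}
    (hιπ : IsShortExact ι π)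
    (hext : ∀ (Q : Type u) [AddCommGroup Q] [Module S Q] [Module.Projective S Q]
      (v : K →ₗ[S] Q), ∃ w : P →ₗ[S] Q, w ∘ₗ ι = v) :
    ExtOneProjVanishes S C := by
  intro N Y _ _ _ _ a b hab Q _ _ _ v
  obtain ⟨h, hh⟩ := Module.projective_lifting_property b π hab.surjective
  have hh' (p) : b (h p) = π p := LinearMap.congr_fun hh p
  have hrange : range (h ∘ₗ ι) ≤ range a := by
    rintro _ ⟨k, rfl⟩
    exact (hab.exact _).1 (by simp [hh', hιπ.exact.apply_apply_eq_zero])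
  obtain ⟨c, hc⟩ := LinearMap.exists_comp_eq_of_range_le hab.injective hrange
  obtain ⟨w₀, hw₀⟩ := hext Q (v ∘ₗ c)
  -- `Y` is the pushout of `N ← K → P`, so `v` and `w₀` glue to a map on `Y`
  have hsurj : Surjective (a.coprod h) := fun y => by
    obtain ⟨p, hp⟩ := hιπ.surjective (b y)
    obtain ⟨n, hn⟩ := (hab.exact (y - h p)).1 (by rw [map_sub, hh', hp, sub_self])
    exact ⟨(n, p), by simp [hn]⟩
  have hker : ker (a.coprod h) ≤ ker (v.coprod w₀) := by
    rintro ⟨n, p⟩ hnp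
    simp only [LinearMap.mem_ker, LinearMap.coprod_apply] at hnp ⊢
    obtain ⟨k, rfl⟩ := (hιπ.exact p).1 (by
      simpa [hh', hab.exact.apply_apply_eq_zero] using congrArg b hnp)
    have hck : a (c k) = h (ι k) := LinearMap.congr_fun hc k
    have : n = -c k := hab.injective (by rw [map_neg, hck, eq_neg_iff_add_eq_zero, hnp])
    rw [this, ← LinearMap.comp_apply w₀, hw₀]
    simp
  obtain ⟨w, hw⟩ := LinearMap.exists_comp_eq_of_ker_le hsurj hker
  refine ⟨w, LinearMap.ext fun n => ?_⟩
  simpa using LinearMap.congr_fun hw (n, 0)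

theorem of_isShortExact {f : A →ₗ[S] B} {g : B →ₗ[S] C} (hfg : IsShortExact f g)
    (hA : ExtOneProjVanishes S A) (hC : ExtOneProjVanishes S C) : ExtOneProjVanishes S B := by
  intro N Y _ _ _ _ a b hab Q _ _ _ v
  obtain ⟨k, k', hkk', hk⟩ := hab.exists_isShortExact_ker_comp hfg
  obtain ⟨w₁, hw₁⟩ := hA hkk' Q v
  obtain ⟨w, hw⟩ :=
    hC (IsShortExact.subtype_ker (g := g ∘ₗ b) (hfg.surjective.comp hab.surjective)) Q w₁
  exact ⟨w, by rw [← hk, ← LinearMap.comp_assoc, hw, hw₁]⟩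

theorem of_prod (h : ExtOneProjVanishes S (A × B)) : ExtOneProjVanishes S A := by
  intro N Y _ _ _ _ a b hab Q _ _ _ v
  have hab' : IsShortExact (LinearMap.inl S Y B ∘ₗ a) (b.prodMap (LinearMap.id : B →ₗ[S] B)) := by
    refine ⟨LinearMap.inl_injective.comp hab.injective, fun x => ?_, fun x => ?_⟩
    · obtain ⟨y, hy⟩ := hab.surjective x.1
      exact ⟨(y, x.2), by simp [hy]⟩
    · obtain ⟨y, z⟩ := x
      simp only [LinearMap.prodMap_apply, LinearMap.id_apply, Prod.mk_eq_zero, Set.mem_range,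
        LinearMap.comp_apply, LinearMap.inl_apply, Prod.mk.injEq, hab.exact y]
      constructor
      · rintro ⟨⟨n, rfl⟩, rfl⟩
        exact ⟨n, rfl, rfl⟩
      · rintro ⟨n, rfl, rfl⟩
        exact ⟨⟨n, rfl⟩, rfl⟩
  obtain ⟨w, hw⟩ := h hab' Q v
  exact ⟨w ∘ₗ LinearMap.inl S Y B, by rw [LinearMap.comp_assoc, hw]⟩

end ExtOneProjVanishes

/-! ### Gorenstein closed classes -/

section GorensteinClosed

variable (S : Type u) [Ring S]

structure ProjectivePresentation (𝒞 : ∀ (M : Type u) [AddCommGroup M] [Module S M], Prop)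
    (M : Type u) [AddCommGroup M] [Module S M] where
  P : ModuleCat.{u} S
  projective : Module.Projective S P
  π : P →ₗ[S] M
  surjective : Surjective π
  mem_ker : 𝒞 (ker π)

structure ProjectiveCopresentation (𝒞 : ∀ (M : Type u) [AddCommGroup M] [Module S M], Prop)
    (M : Type u) [AddCommGroup M] [Module S M] where
  P : ModuleCat.{u} S
  projective : Module.Projective S P
  ι : M →ₗ[S] P
  injective : Injective ι
  mem_coker : 𝒞 (P ⧸ range ι)

structure GorensteinClosed (𝒞 : ∀ (M : Type u) [AddCommGroup M] [Module S M], Prop) : Prop where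
  extOneProjVanishes {M : Type u} [AddCommGroup M] [Module S M] : 𝒞 M → ExtOneProjVanishes S M
  presentation {M : Type u} [AddCommGroup M] [Module S M] :
    𝒞 M → Nonempty (ProjectivePresentation S 𝒞 M)
  copresentation {M : Type u} [AddCommGroup M] [Module S M] :
    𝒞 M → Nonempty (ProjectiveCopresentation S 𝒞 M)

/-- A complete projective resolution cut into the short exact sequences
`0 → Z i → P (i+1) → Z (i+1) → 0`, where `Z i` is the image of `P i → P (i+1)`. -/
structure ProjectiveLadder where
  Z : ℤ → ModuleCat.{u} S
  P : ℤ → ModuleCat.{u} S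
  projective : ∀ i, Module.Projective S (P i)
  ι : ∀ i, Z i →ₗ[S] P (i + 1)
  π : ∀ i, P i →ₗ[S] Z i
  isShortExact : ∀ i, IsShortExact (ι i) (π (i + 1))
  extOneProjVanishes : ∀ i, ExtOneProjVanishes S (Z i)

end GorensteinClosed

namespace ProjectiveLadder

variable {S : Type u} [Ring S] (L : ProjectiveLadder S)

theorem surjective_π (i : ℤ) : Surjective (L.π i) := by
  obtain ⟨j, rfl⟩ : ∃ j, i = j + 1 := ⟨i - 1, by ring⟩
  exact (L.isShortExact j).surjective

theorem exists_comp_ι_eq {i : ℤ} (Q : Type u) [AddCommGroup Q] [Module S Q] [Module.Projective S Q]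
    (f : L.P (i + 1) →ₗ[S] Q) (hf : f ∘ₗ L.ι i = 0) :
    ∃ g : L.P (i + 1 + 1) →ₗ[S] Q, g ∘ₗ L.ι (i + 1) ∘ₗ L.π (i + 1) = f := by
  have hker : ker (L.π (i + 1)) ≤ ker f := by
    rw [(L.isShortExact i).exact.linearMap_ker_eq]
    exact LinearMap.range_le_ker_iff.2 hf
  obtain ⟨f', hf'⟩ := LinearMap.exists_comp_eq_of_ker_le (L.isShortExact i).surjective hker
  obtain ⟨g, hg⟩ := L.extOneProjVanishes (i + 1 + 1) (L.isShortExact (i + 1)) Q f'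
  exact ⟨g, by rw [← LinearMap.comp_assoc, hg, hf']⟩

noncomputable def completeProjectiveResolution : CompleteProjectiveResolution S (L.Z 0) where
  P i := L.P i
  projective := L.projective
  d i := L.ι i ∘ₗ L.π i
  exact i := by
    rw [LinearMap.range_comp_of_range_eq_top _ (range_eq_top.2 (L.surjective_π i)),
      LinearMap.ker_comp_of_ker_eq_bot _ (ker_eq_bot.2 (L.isShortExact (i + 1)).injective)]
    exact (L.isShortExact i).exact.linearMap_ker_eq.symm
  homExact Q _ _ _ i f hf := L.exists_comp_ι_eq Q f <| LinearMap.ext fun x => by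
    obtain ⟨y, rfl⟩ := L.surjective_π i x
    exact LinearMap.congr_fun hf y
  equiv := ⟨(LinearEquiv.ofInjective _ (L.isShortExact 0).injective).trans (LinearEquiv.ofEq _ _
    (LinearMap.range_comp_of_range_eq_top _ (range_eq_top.2 (L.surjective_π 0))).symm)⟩

theorem gorensteinClosed : GorensteinClosed S
    fun M _ _ => ∃ (L : ProjectiveLadder S) (k : ℤ), Nonempty (M ≃ₗ[S] L.Z k) where
  extOneProjVanishes := fun ⟨L, k, ⟨e⟩⟩ => (L.extOneProjVanishes k).of_linearEquiv e.symm
  presentation := fun ⟨L, k, ⟨e⟩⟩ => by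
    obtain ⟨j, rfl⟩ : ∃ j, k = j + 1 := ⟨k - 1, by ring⟩
    have hker : ker (e.symm.toLinearMap ∘ₗ L.π (j + 1)) = range (L.ι j) := by
      rw [LinearEquiv.ker_comp, (L.isShortExact j).exact.linearMap_ker_eq]
    exact ⟨⟨L.P (j + 1), L.projective _, _, e.symm.surjective.comp (L.surjective_π _),
      L, j, ⟨(LinearEquiv.ofEq _ _ hker).trans
        (LinearEquiv.ofInjective _ (L.isShortExact j).injective).symm⟩⟩⟩
  copresentation := fun ⟨L, k, ⟨e⟩⟩ => by
    have hrange : range (L.ι k ∘ₗ e.toLinearMap) = range (L.ι k) :=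
      LinearMap.range_comp_of_range_eq_top _ e.range
    exact ⟨⟨L.P (k + 1), L.projective _, _, (L.isShortExact k).injective.comp e.injective,
      L, k + 1, ⟨(Submodule.quotEquivOfEq _ _ hrange).trans
        ((L.isShortExact k).exact.linearEquivOfSurjective (L.isShortExact k).surjective)⟩⟩⟩

end ProjectiveLadder

namespace GorensteinClosed

variable {S : Type u} [Ring S] {𝒞 : ∀ (M : Type u) [AddCommGroup M] [Module S M], Prop}
variable (h : GorensteinClosed S 𝒞) {M : Type u} [AddCommGroup M] [Module S M] (hM : 𝒞 M)

noncomputable def up : ℕ → {X : ModuleCat.{u} S // 𝒞 X}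
  | 0 => ⟨.of S M, hM⟩
  | n + 1 =>
    let c := (h.copresentation (up n).2).some
    ⟨.of S (c.P ⧸ range c.ι), c.mem_coker⟩

noncomputable def down : ℕ → {X : ModuleCat.{u} S // 𝒞 X}
  | 0 => ⟨.of S M, hM⟩
  | n + 1 =>
    let p := (h.presentation (down n).2).some
    ⟨.of S (ker p.π), p.mem_ker⟩

/-- Splices the chosen iterated copresentations `up` and presentations `down` of `M = Z 0`. -/
noncomputable def ladder : ProjectiveLadder S where
  Z
    | .ofNat n => (h.up hM n).1
    | .negSucc n => (h.down hM (n + 1)).1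
  P
    | .ofNat 0 => (h.presentation hM).some.P
    | .ofNat (n + 1) => (h.copresentation (h.up hM n).2).some.P
    | .negSucc n => (h.presentation (h.down hM (n + 1)).2).some.P
  projective
    | .ofNat 0 => (h.presentation hM).some.projective
    | .ofNat (n + 1) => (h.copresentation (h.up hM n).2).some.projective
    | .negSucc n => (h.presentation (h.down hM (n + 1)).2).some.projective
  -- `negSucc 0` is split off so that the target `P (Int.negSucc n + 1)` reduces
  ι
    | .ofNat n => (h.copresentation (h.up hM n).2).some.ι
    | .negSucc 0 => (ker (h.presentation hM).some.π).subtype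
    | .negSucc (n + 1) => (ker (h.presentation (h.down hM (n + 1)).2).some.π).subtype
  π
    | .ofNat 0 => (h.presentation hM).some.π
    | .ofNat (n + 1) => (range (h.copresentation (h.up hM n).2).some.ι).mkQ
    | .negSucc n => (h.presentation (h.down hM (n + 1)).2).some.π
  isShortExact
    | .ofNat n => .mkQ_range (h.copresentation (h.up hM n).2).some.injective
    | .negSucc 0 => .subtype_ker (h.presentation hM).some.surjective
    | .negSucc (n + 1) => .subtype_ker (h.presentation (h.down hM (n + 1)).2).some.surjective
  extOneProjVanishes
    | .ofNat n => h.extOneProjVanishes (h.up hM n).2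
    | .negSucc n => h.extOneProjVanishes (h.down hM (n + 1)).2

end GorensteinClosed

section

variable {S : Type u} [Ring S]

theorem GorensteinClosed.isGorensteinProjective
    {𝒞 : ∀ (M : Type u) [AddCommGroup M] [Module S M], Prop} (h : GorensteinClosed S 𝒞)
    {M : Type u} [AddCommGroup M] [Module S M] (hM : 𝒞 M) : IsGorensteinProjective S M :=
  ⟨(h.ladder hM).completeProjectiveResolution⟩

namespace CompleteProjectiveResolution

variable {G : Type u} [AddCommGroup G] [Module S G] (c : CompleteProjectiveResolution S G)

theorem isShortExact_range (i : ℤ) :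
    IsShortExact (range (c.d i)).subtype (c.d (i + 1)).rangeRestrict := by
  refine ⟨Subtype.val_injective, (c.d (i + 1)).surjective_rangeRestrict, ?_⟩
  rw [LinearMap.exact_iff, LinearMap.ker_rangeRestrict, Submodule.range_subtype, c.exact i]

theorem extOneProjVanishes_range (i : ℤ) : ExtOneProjVanishes S (range (c.d i)) := by
  obtain ⟨k, rfl⟩ : ∃ k, i = k + 1 + 1 := ⟨i - 1 - 1, by ring⟩
  have := c.projective (k + 1 + 1)
  refine .of_isShortExact_of_projective (c.isShortExact_range (k + 1)) fun Q _ _ hQ v => ?_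
  have hv : (v ∘ₗ (c.d (k + 1)).rangeRestrict).comp (c.d k) = 0 := by
    ext x
    have : (c.d (k + 1)).rangeRestrict (c.d k x) = 0 := Subtype.ext ((c.exact k).le ⟨x, rfl⟩)
    simp [this]
  obtain ⟨g, hg⟩ := c.homExact Q hQ k _ hv
  exact ⟨g, LinearMap.ext fun ⟨_, x, rfl⟩ => LinearMap.congr_fun hg x⟩

noncomputable def ladder : ProjectiveLadder S where
  Z i := .of S (range (c.d i))
  P i := .of S (c.P i)
  projective := c.projective
  ι i := (range (c.d i)).subtype
  π i := (c.d i).rangeRestrict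
  isShortExact := c.isShortExact_range
  extOneProjVanishes := c.extOneProjVanishes_range

end CompleteProjectiveResolution

theorem isGorensteinProjective_iff_exists_ladder {M : Type u} [AddCommGroup M] [Module S M] :
    IsGorensteinProjective S M ↔
      ∃ (L : ProjectiveLadder S) (k : ℤ), Nonempty (M ≃ₗ[S] L.Z k) :=
  ⟨fun ⟨c⟩ => ⟨c.ladder, 0, c.equiv⟩, ProjectiveLadder.gorensteinClosed.isGorensteinProjective⟩

theorem gorensteinClosed_isGorensteinProjective :
    GorensteinClosed S (IsGorensteinProjective S) := by
  convert ProjectiveLadder.gorensteinClosed (S := S) using 1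
  funext M _ _
  exact propext isGorensteinProjective_iff_exists_ladder

end

/-! ### Closure properties of Gorenstein projective modules -/

section Horseshoe

variable {S : Type*} [Ring S]
variable {A B C PA PC : Type*} [AddCommGroup A] [Module S A] [AddCommGroup B] [Module S B]
  [AddCommGroup C] [Module S C] [AddCommGroup PA] [Module S PA] [AddCommGroup PC] [Module S PC]
variable {f : A →ₗ[S] B} {g : B →ₗ[S] C}

theorem IsShortExact.exists_horseshoe_surjective [Module.Projective S PC]
    (hfg : IsShortExact f g) {πA : PA →ₗ[S] A} (hπA : Surjective πA) {πC : PC →ₗ[S] C}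
    (hπC : Surjective πC) : ∃ σ : PA × PC →ₗ[S] B, Surjective σ ∧
      ∃ (k : ker πA →ₗ[S] ker σ) (k' : ker σ →ₗ[S] ker πC), IsShortExact k k' := by
  obtain ⟨ℓ, hℓ⟩ := Module.projective_lifting_property g πC hfg.surjective
  have comm₂ : πC ∘ₗ LinearMap.snd S PA PC = g ∘ₗ (f ∘ₗ πA).coprod ℓ := by
    ext x <;> simp [hfg.exact.apply_apply_eq_zero, ← hℓ]
  obtain ⟨hσ, k, k', hkk', -⟩ := IsShortExact.inl_snd.exists_isShortExact_ker hfg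
    (LinearMap.coprod_inl _ _) comm₂ (.subtype_ker hπA) (.subtype_ker hπC)
  exact ⟨_, hσ, k, k', hkk'⟩

end Horseshoe

section

variable {S : Type u} [Ring S]
variable {A B C M N Q : Type u} [AddCommGroup A] [Module S A] [AddCommGroup B] [Module S B]
  [AddCommGroup C] [Module S C] [AddCommGroup M] [Module S M] [AddCommGroup N] [Module S N]
  [AddCommGroup Q] [Module S Q]

theorem IsShortExact.exists_horseshoe_injective {PA PC : Type u} [AddCommGroup PA] [Module S PA]
    [AddCommGroup PC] [Module S PC] [Module.Projective S PA] {f : A →ₗ[S] B} {g : B →ₗ[S] C}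
    (hfg : IsShortExact f g) (hC : ExtOneProjVanishes S C) {ιA : A →ₗ[S] PA} (hιA : Injective ιA)
    {ιC : C →ₗ[S] PC} (hιC : Injective ιC) : ∃ φ : B →ₗ[S] PA × PC, Injective φ ∧
      ∃ (k : PA ⧸ range ιA →ₗ[S] (PA × PC) ⧸ range φ)
        (k' : (PA × PC) ⧸ range φ →ₗ[S] PC ⧸ range ιC), IsShortExact k k' := by
  obtain ⟨j, hj⟩ := hC hfg PA ιA
  have comm₁ : j.prod (ιC ∘ₗ g) ∘ₗ f = LinearMap.inl S PA PC ∘ₗ ιA := by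
    ext x <;> simp [hfg.exact.apply_apply_eq_zero, ← hj]
  exact ⟨_, hfg.exists_isShortExact_coker IsShortExact.inl_snd comm₁ (LinearMap.snd_prod _ _).symm
    (.mkQ_range hιA) (.mkQ_range hιC)⟩

namespace IsGorensteinProjective

theorem extOneProjVanishes (h : IsGorensteinProjective S M) : ExtOneProjVanishes S M :=
  gorensteinClosed_isGorensteinProjective.extOneProjVanishes h

theorem presentation (h : IsGorensteinProjective S M) :
    Nonempty (ProjectivePresentation S (IsGorensteinProjective S) M) :=
  gorensteinClosed_isGorensteinProjective.presentation h

theorem copresentation (h : IsGorensteinProjective S M) :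
    Nonempty (ProjectiveCopresentation S (IsGorensteinProjective S) M) :=
  gorensteinClosed_isGorensteinProjective.copresentation h

theorem of_linearEquiv (h : IsGorensteinProjective S M) (e : M ≃ₗ[S] N) :
    IsGorensteinProjective S N :=
  let ⟨c⟩ := h
  ⟨{ c with equiv := c.equiv.map e.symm.trans }⟩

end IsGorensteinProjective

theorem gorensteinClosed_projective : GorensteinClosed S fun M _ _ => Module.Projective S M where
  extOneProjVanishes _ := .of_projective
  presentation _ := ⟨⟨.of S _, ‹_›, LinearMap.id, surjective_id, by
    rw [LinearMap.ker_id]; infer_instance⟩⟩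
  copresentation _ := ⟨⟨.of S _, ‹_›, LinearMap.id, injective_id, by
    rw [LinearMap.range_id]; infer_instance⟩⟩

theorem IsGorensteinProjective.of_projective [Module.Projective S M] :
    IsGorensteinProjective S M :=
  gorensteinClosed_projective.isGorensteinProjective ‹_›

theorem gorensteinClosed_extensions : GorensteinClosed S fun B _ _ =>
    ∃ (A C : ModuleCat.{u} S) (f : A →ₗ[S] B) (g : B →ₗ[S] C),
      IsShortExact f g ∧ IsGorensteinProjective S A ∧ IsGorensteinProjective S C where
  extOneProjVanishes := fun ⟨_, _, _, _, hfg, hA, hC⟩ =>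
    .of_isShortExact hfg hA.extOneProjVanishes hC.extOneProjVanishes
  presentation := fun ⟨_, _, _, _, hfg, hA, hC⟩ => by
    obtain ⟨pA⟩ := hA.presentation
    obtain ⟨pC⟩ := hC.presentation
    have := pC.projective
    have := pA.projective
    obtain ⟨σ, hσ, k, k', hkk'⟩ := hfg.exists_horseshoe_surjective pA.surjective pC.surjective
    exact ⟨⟨.of S (pA.P × pC.P), inferInstance, σ, hσ, .of S _, .of S _, k, k', hkk',
      pA.mem_ker, pC.mem_ker⟩⟩
  copresentation := fun ⟨_, _, _, _, hfg, hA, hC⟩ => by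
    obtain ⟨cA⟩ := hA.copresentation
    obtain ⟨cC⟩ := hC.copresentation
    have := cC.projective
    have := cA.projective
    obtain ⟨φ, hφ, k, k', hkk'⟩ :=
      hfg.exists_horseshoe_injective hC.extOneProjVanishes cA.injective cC.injective
    exact ⟨⟨.of S (cA.P × cC.P), inferInstance, φ, hφ, .of S _, .of S _, k, k', hkk',
      cA.mem_coker, cC.mem_coker⟩⟩

theorem IsShortExact.isGorensteinProjective_middle {f : A →ₗ[S] B} {g : B →ₗ[S] C}
    (hfg : IsShortExact f g) (hA : IsGorensteinProjective S A) (hC : IsGorensteinProjective S C) :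
    IsGorensteinProjective S B :=
  gorensteinClosed_extensions.isGorensteinProjective ⟨.of S A, .of S C, f, g, hfg, hA, hC⟩

theorem IsGorensteinProjective.prod (hA : IsGorensteinProjective S A)
    (hB : IsGorensteinProjective S B) : IsGorensteinProjective S (A × B) :=
  IsShortExact.inl_snd.isGorensteinProjective_middle hA hB

theorem gorensteinClosed_summands : GorensteinClosed S fun A _ _ =>
    ∃ Q : ModuleCat.{u} S, Module.Projective S Q ∧ IsGorensteinProjective S (A × Q) where
  extOneProjVanishes := fun ⟨_, _, h⟩ => h.extOneProjVanishes.of_prod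
  presentation := fun ⟨Q, hQ, h⟩ => by
    obtain ⟨p⟩ := h.presentation
    obtain ⟨k, k', hkk', -⟩ := (IsShortExact.subtype_ker p.surjective).exists_isShortExact_ker_comp
      IsShortExact.inr_fst
    have hK := hkk'.isGorensteinProjective_middle p.mem_ker .of_projective
    exact ⟨⟨p.P, p.projective, _, Prod.fst_surjective.comp p.surjective, Q, hQ,
      hK.prod .of_projective⟩⟩
  copresentation := fun ⟨Q, hQ, h⟩ => by
    obtain ⟨c⟩ := h.copresentation
    obtain ⟨k, k', hkk'⟩ := IsShortExact.inl_snd.exists_isShortExact_coker_comp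
      (IsShortExact.mkQ_range c.injective)
    have hK := hkk'.isGorensteinProjective_middle .of_projective c.mem_coker
    exact ⟨⟨c.P, c.projective, _, c.injective.comp LinearMap.inl_injective, Q, hQ,
      hK.prod .of_projective⟩⟩

theorem IsGorensteinProjective.of_prod [Module.Projective S Q]
    (h : IsGorensteinProjective S (A × Q)) : IsGorensteinProjective S A :=
  gorensteinClosed_summands.isGorensteinProjective ⟨.of S Q, ‹_›, h⟩

theorem IsShortExact.isGorensteinProjective_left {f : A →ₗ[S] B} {g : B →ₗ[S] C}
    (hfg : IsShortExact f g) (hB : IsGorensteinProjective S B) (hC : IsGorensteinProjective S C) :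
    IsGorensteinProjective S A := by
  obtain ⟨p⟩ := hC.presentation
  have := p.projective
  -- `ker (g.coprod p.π)` is the pullback of `g` and `p.π`, up to the sign of one coordinate
  obtain ⟨-, k, k', hkk', -⟩ := IsShortExact.inl_snd.exists_isShortExact_ker
    (γ := (0 : p.P →ₗ[S] PUnit.{u + 1})) IsShortExact.id_zero (LinearMap.coprod_inl g p.π)
    (Subsingleton.elim _ _) hfg .id_zero
  obtain ⟨-, l, l', hll', -⟩ := IsShortExact.inr_fst.exists_isShortExact_ker
    (γ := (0 : B →ₗ[S] PUnit.{u + 1})) IsShortExact.id_zero (LinearMap.coprod_inr g p.π)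
    (Subsingleton.elim _ _) (.subtype_ker p.surjective) .id_zero
  obtain ⟨e⟩ := hkk'.nonempty_linearEquiv_prod
  exact ((hll'.isGorensteinProjective_middle p.mem_ker hB).of_linearEquiv e).of_prod

end

/-! ### Gorenstein projective dimension -/

namespace FiniteExactSequenceTo

variable {S : Type u} [Ring S]

def single (M : Type u) [AddCommGroup M] [Module S M] : FiniteExactSequenceTo S M 0 where
  G | 0 => M | _ + 1 => PUnit.{u + 1}
  acg
    | 0 => inferInstanceAs (AddCommGroup M)
    | _ + 1 => inferInstanceAs (AddCommGroup PUnit.{u + 1})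
  mod
    | 0 => inferInstanceAs (Module S M)
    | _ + 1 => inferInstanceAs (Module S PUnit.{u + 1})
  d | 0 => 0 | _ + 1 => 0
  aug := LinearMap.id
  aug_surjective := surjective_id
  exact_aug := by rw [LinearMap.range_zero, LinearMap.ker_id]
  exact _ := Subsingleton.elim (α := Submodule S PUnit.{u + 1}) _ _
  trivial_of_gt | _ + 1, _ => inferInstanceAs (Subsingleton PUnit.{u + 1})

variable {n : ℕ} {K T M : Type u} [AddCommGroup K] [Module S K] [AddCommGroup T] [Module S T]
  [AddCommGroup M] [Module S M]

def cons (E : FiniteExactSequenceTo S K n) {ι : K →ₗ[S] T} {π : T →ₗ[S] M}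
    (h : IsShortExact ι π) : FiniteExactSequenceTo S M (n + 1) where
  G | 0 => T | k + 1 => E.G k
  acg | 0 => inferInstanceAs (AddCommGroup T) | k + 1 => inferInstanceAs (AddCommGroup (E.G k))
  mod | 0 => inferInstanceAs (Module S T) | k + 1 => inferInstanceAs (Module S (E.G k))
  d | 0 => ι ∘ₗ E.aug | k + 1 => E.d k
  aug := π
  aug_surjective := h.surjective
  exact_aug := by
    rw [LinearMap.range_comp_of_range_eq_top _ (range_eq_top.2 E.aug_surjective),
      h.exact.linearMap_ker_eq]
  exact
    | 0 => by
      rw [LinearMap.ker_comp_of_ker_eq_bot _ (ker_eq_bot.2 h.injective)]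
      exact E.exact_aug
    | k + 1 => E.exact k
  trivial_of_gt | k + 1, hk => E.trivial_of_gt k (by omega)

def tail (E : FiniteExactSequenceTo S M (n + 1)) : FiniteExactSequenceTo S (ker E.aug) n where
  G k := E.G (k + 1)
  d k := E.d (k + 1)
  aug := (E.d 0).codRestrict _ fun x => E.exact_aug.le ⟨x, rfl⟩
  aug_surjective := by
    rintro ⟨y, hy⟩
    obtain ⟨x, rfl⟩ := E.exact_aug.ge hy
    exact ⟨x, rfl⟩
  exact_aug := by rw [LinearMap.ker_codRestrict]; exact E.exact 0
  exact k := E.exact (k + 1)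
  trivial_of_gt k hk := E.trivial_of_gt (k + 1) (by omega)

end FiniteExactSequenceTo

namespace GorensteinProjectiveDimensionLE

variable {S : Type u} [Ring S]
variable {n : ℕ} {K T M : Type u} [AddCommGroup K] [Module S K] [AddCommGroup T] [Module S T]
  [AddCommGroup M] [Module S M]

theorem zero_iff : GorensteinProjectiveDimensionLE S M 0 ↔ IsGorensteinProjective S M := by
  refine ⟨fun ⟨E, hE⟩ => ?_, fun h => ⟨.single M, fun | 0, _ => h⟩⟩
  have := E.trivial_of_gt 1 zero_lt_one
  have hinj : Injective E.aug := by
    rw [← ker_eq_bot, ← E.exact_aug, range_eq_bot]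
    exact Subsingleton.elim _ _
  exact (hE 0 le_rfl).of_linearEquiv (.ofBijective E.aug ⟨hinj, E.aug_surjective⟩)

theorem succ_of_isShortExact {ι : K →ₗ[S] T} {π : T →ₗ[S] M} (h : IsShortExact ι π)
    (hT : IsGorensteinProjective S T) (hK : GorensteinProjectiveDimensionLE S K n) :
    GorensteinProjectiveDimensionLE S M (n + 1) :=
  let ⟨E, hE⟩ := hK
  ⟨E.cons h, fun | 0, _ => hT | k + 1, hk => hE k (by omega)⟩

theorem ker_aug (E : FiniteExactSequenceTo S M (n + 1))
    (hE : ∀ i ≤ n + 1, IsGorensteinProjective S (E.G i)) :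
    GorensteinProjectiveDimensionLE S (ker E.aug) n :=
  ⟨E.tail, fun k hk => hE (k + 1) (by omega)⟩

end GorensteinProjectiveDimensionLE

namespace IsShortExact

variable {S : Type u} [Ring S]
variable {n : ℕ} {A B C : Type u} [AddCommGroup A] [Module S A] [AddCommGroup B] [Module S B]
  [AddCommGroup C] [Module S C] {f : A →ₗ[S] B} {g : B →ₗ[S] C}

theorem gorensteinProjectiveDimensionLE_middle (hfg : IsShortExact f g)
    (hC : IsGorensteinProjective S C) (hA : GorensteinProjectiveDimensionLE S A n) :
    GorensteinProjectiveDimensionLE S B n := by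
  induction n generalizing A B C with
  | zero =>
    rw [GorensteinProjectiveDimensionLE.zero_iff] at hA ⊢
    exact hfg.isGorensteinProjective_middle hA hC
  | succ n ih =>
    obtain ⟨E, hE⟩ := hA
    obtain ⟨p⟩ := hC.presentation
    have := p.projective
    obtain ⟨σ, hσ, k, k', hkk'⟩ := hfg.exists_horseshoe_surjective E.aug_surjective p.surjective
    exact .succ_of_isShortExact (.subtype_ker hσ) ((hE 0 (by omega)).prod .of_projective)
      (ih hkk' p.mem_ker (.ker_aug E hE))

theorem gorensteinProjectiveDimensionLE_left (hfg : IsShortExact f g)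
    (hC : IsGorensteinProjective S C) (hB : GorensteinProjectiveDimensionLE S B n) :
    GorensteinProjectiveDimensionLE S A n := by
  cases n with
  | zero =>
    rw [GorensteinProjectiveDimensionLE.zero_iff] at hB ⊢
    exact hfg.isGorensteinProjective_left hB hC
  | succ n =>
    obtain ⟨E, hE⟩ := hB
    obtain ⟨k, k', hkk', -⟩ := (subtype_ker E.aug_surjective).exists_isShortExact_ker_comp hfg
    have hT := (subtype_ker (g := g ∘ₗ E.aug) (hfg.surjective.comp E.aug_surjective)
      ).isGorensteinProjective_left (hE 0 (by omega)) hC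
    exact .succ_of_isShortExact hkk' hT (.ker_aug E hE)

theorem gorensteinProjectiveDimensionLE_iff (hfg : IsShortExact f g)
    (hC : IsGorensteinProjective S C) :
    GorensteinProjectiveDimensionLE S A n ↔ GorensteinProjectiveDimensionLE S B n :=
  ⟨hfg.gorensteinProjectiveDimensionLE_middle hC, hfg.gorensteinProjectiveDimensionLE_left hC⟩

end IsShortExact

theorem gpd_eq_of_shortExact_of_gorensteinProjective_general
    (R : Type u) [Ring R]
    (M₃ M₂ M₁ : Type u) [AddCommGroup M₃] [Module R M₃] [AddCommGroup M₂] [Module R M₂]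
    [AddCommGroup M₁] [Module R M₁]
    (f : M₃ →ₗ[R] M₂) (g : M₂ →ₗ[R] M₁)
    (hf : Function.Injective f) (hg : Function.Surjective g)
    (hfg : LinearMap.range f = LinearMap.ker g)
    (hM₁ : IsGorensteinProjective R M₁) :
    gpd R M₃ = gpd R M₂ := by
  have h : IsShortExact f g := ⟨hf, hg, LinearMap.exact_iff.2 hfg.symm⟩
  simp only [gpd, h.gorensteinProjectiveDimensionLE_iff hM₁]

/-- If `0 → M₃ → M₂ → M₁ → 0` is a short exact sequence of left `R`-modules
with `M₃ ≠ 0` and `M₁` Gorenstein projective, then `Gpd_R(M₃) = Gpd_R(M₂)`. -/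
theorem gpd_eq_of_shortExact_of_gorensteinProjective
    (R : Type u) [Ring R]
    (M₃ M₂ M₁ : Type u) [AddCommGroup M₃] [Module R M₃] [AddCommGroup M₂] [Module R M₂]
    [AddCommGroup M₁] [Module R M₁]
    (hM₃ : Nontrivial M₃)
    (f : M₃ →ₗ[R] M₂) (g : M₂ →ₗ[R] M₁)
    (hf : Function.Injective f) (hg : Function.Surjective g)
    (hfg : LinearMap.range f = LinearMap.ker g)
    (hM₁ : IsGorensteinProjective R M₁) :
    gpd R M₃ = gpd R M₂ :=
  gpd_eq_of_shortExact_of_gorensteinProjective_general R M₃ M₂ M₁ f g hf hg hfg hM₁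
end

section
/- Let R be a ring and let 0 → A → G₁ → G₀ → M → 0 be an exact sequence of left R-modules with G₀ and G₁ Gorenstein projective. Then there exists an exact sequence 0 → A → P → G → M → 0 of left R-modules with P projective and G Gorenstein projective. -/
universe u

open LinearMap

namespace CompleteProjectiveResolution
variable {S : Type u} [Ring S] {G : Type u} [AddCommGroup G] [Module S G]
variable (C : CompleteProjectiveResolution S G)

lemma d_d (i : ℤ) (x : C.P i) : C.d (i + 1) (C.d i x) = 0 := by
  have : C.d i x ∈ LinearMap.ker (C.d (i + 1)) := by
    rw [← C.exact i]; exact ⟨x, rfl⟩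
  exact this

lemma ker_eq (i : ℤ) : LinearMap.ker (C.d (i + 1)) = LinearMap.range (C.d i) :=
  (C.exact i).symm
lemma extend_from_range (i : ℤ) (Q : Type u) [AddCommGroup Q] [Module S Q]
    (hQ : Module.Projective S Q) (φ : ↥(LinearMap.range (C.d (i + 1))) →ₗ[S] Q) :
    ∃ g : C.P (i + 1 + 1) →ₗ[S] Q,
      ∀ (x : C.P (i + 1 + 1)) (hx : x ∈ LinearMap.range (C.d (i + 1))), g x = φ ⟨x, hx⟩ := by
  have hcomp : (φ ∘ₗ (C.d (i + 1)).rangeRestrict).comp (C.d i) = 0 := by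
    ext x
    have h0 : (C.d (i + 1)).rangeRestrict (C.d i x) = 0 := Subtype.ext (C.d_d i x)
    simp [h0]
  obtain ⟨g, hg⟩ := C.homExact Q hQ i (φ ∘ₗ (C.d (i + 1)).rangeRestrict) hcomp
  refine ⟨g, ?_⟩
  rintro x ⟨y, rfl⟩
  exact LinearMap.congr_fun hg y


/-- Shift a complete projective resolution up by one: the first cosyzygy is
Gorenstein projective. -/
noncomputable def shiftOne : CompleteProjectiveResolution S ↥(LinearMap.range (C.d (0 + 1))) where
  P := fun i => C.P (i + 1)
  projective := fun i => C.projective (i + 1)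
  d := fun i => C.d (i + 1)
  exact := fun i => C.exact (i + 1)
  homExact := fun Q _ _ hQ i f hf => C.homExact Q hQ (i + 1) f hf
  equiv := ⟨LinearEquiv.refl S _⟩

end CompleteProjectiveResolution

section Theta
variable {S : Type u} [Ring S] {X Z : Type u}
  [AddCommGroup X] [Module S X] [AddCommGroup Z] [Module S Z]
  (CX : CompleteProjectiveResolution S X) (CZ : CompleteProjectiveResolution S Z)

/-- Upward step for the connecting maps of the horseshoe construction. -/
lemma theta_step_up (i : ℤ) (t : CZ.P i →ₗ[S] CX.P (i + 1))
    (t' : CZ.P (i + 1) →ₗ[S] CX.P (i + 1 + 1))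
    (hR : ∀ z, CX.d (i + 1) (t z) + t' (CZ.d i z) = 0) :
    ∃ t'' : CZ.P (i + 1 + 1) →ₗ[S] CX.P (i + 1 + 1 + 1),
      ∀ z, CX.d (i + 1 + 1) (t' z) + t'' (CZ.d (i + 1) z) = 0 := by
  set F : CZ.P (i + 1) →ₗ[S] CX.P (i + 1 + 1 + 1) := -((CX.d (i + 1 + 1)) ∘ₗ t') with hF
  have hF0 : F.comp (CZ.d i) = 0 := by
    ext z
    have h1 : t' (CZ.d i z) = -(CX.d (i + 1) (t z)) :=
      eq_neg_of_add_eq_zero_right (hR z)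
    simp [hF, h1, CX.d_d (i + 1) (t z)]
  obtain ⟨g, hg⟩ := CZ.homExact (CX.P (i + 1 + 1 + 1)) (CX.projective _) i F hF0
  refine ⟨g, fun z => ?_⟩
  have := LinearMap.congr_fun hg z
  simp only [LinearMap.comp_apply] at this
  rw [this]
  simp [hF]

/-- Downward step for the connecting maps of the horseshoe construction. -/
lemma theta_step_down (i : ℤ) (t : CZ.P (i + 1) →ₗ[S] CX.P (i + 1 + 1))
    (t' : CZ.P (i + 1 + 1) →ₗ[S] CX.P (i + 1 + 1 + 1))
    (hR : ∀ z, CX.d (i + 1 + 1) (t z) + t' (CZ.d (i + 1) z) = 0) :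
    ∃ tN : CZ.P i →ₗ[S] CX.P (i + 1),
      ∀ z, CX.d (i + 1) (tN z) + t (CZ.d i z) = 0 := by
  have hmem : ∀ z : CZ.P i, -(t (CZ.d i z)) ∈ LinearMap.range (CX.d (i + 1)) := by
    intro z
    rw [← CX.ker_eq (i + 1)]
    have h1 : CX.d (i + 1 + 1) (t (CZ.d i z)) = -(t' (CZ.d (i + 1) (CZ.d i z))) :=
      eq_neg_of_add_eq_zero_left (hR (CZ.d i z))
    simp [LinearMap.mem_ker, h1, CZ.d_d i z]
  haveI := CZ.projective i
  obtain ⟨tN, htN⟩ := Module.projective_lifting_property (CX.d (i + 1)).rangeRestrict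
    (LinearMap.codRestrict _ (-(t ∘ₗ CZ.d i)) (fun z => by simpa using hmem z))
    (LinearMap.surjective_rangeRestrict _)
  refine ⟨tN, fun z => ?_⟩
  have := congrArg Subtype.val (LinearMap.congr_fun htN z)
  simp only [LinearMap.comp_apply] at this
  -- this : CX.d (i+1) (tN z) = -(t (CZ.d i z))
  rw [show CX.d (i + 1) (tN z) = ((CX.d (i + 1)).rangeRestrict (tN z) : CX.P (i + 1 + 1)) from rfl,
    this]
  simp

variable (θ₀ : CZ.P 0 →ₗ[S] CX.P (0 + 1)) (θ₁ : CZ.P (0 + 1) →ₗ[S] CX.P (0 + 1 + 1))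
  (hR0 : ∀ z, CX.d (0 + 1) (θ₀ z) + θ₁ (CZ.d 0 z) = 0)

noncomputable def thetaPos :
    ∀ n : ℕ, Σ' (t : CZ.P (n : ℤ) →ₗ[S] CX.P ((n : ℤ) + 1))
      (t' : CZ.P ((n : ℤ) + 1) →ₗ[S] CX.P ((n : ℤ) + 1 + 1)),
      ∀ z, CX.d ((n : ℤ) + 1) (t z) + t' (CZ.d (n : ℤ) z) = 0
  | 0 => ⟨θ₀, θ₁, hR0⟩
  | (n + 1) =>
    ⟨(thetaPos n).2.1,
      (theta_step_up CX CZ (n : ℤ) (thetaPos n).1 (thetaPos n).2.1 (thetaPos n).2.2).choose,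
      (theta_step_up CX CZ (n : ℤ) (thetaPos n).1 (thetaPos n).2.1 (thetaPos n).2.2).choose_spec⟩

noncomputable def thetaNeg :
    ∀ n : ℕ, Σ' (t : CZ.P (Int.negSucc n) →ₗ[S] CX.P (Int.negSucc n + 1))
      (t' : CZ.P (Int.negSucc n + 1) →ₗ[S] CX.P (Int.negSucc n + 1 + 1)),
      ∀ z, CX.d (Int.negSucc n + 1) (t z) + t' (CZ.d (Int.negSucc n) z) = 0
  | 0 =>
    ⟨(theta_step_down CX CZ (Int.negSucc 0) θ₀ θ₁ hR0).choose, θ₀,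
      (theta_step_down CX CZ (Int.negSucc 0) θ₀ θ₁ hR0).choose_spec⟩
  | (n + 1) =>
    ⟨(theta_step_down CX CZ (Int.negSucc (n + 1)) (thetaNeg n).1 (thetaNeg n).2.1
        (thetaNeg n).2.2).choose,
      (thetaNeg n).1,
      (theta_step_down CX CZ (Int.negSucc (n + 1)) (thetaNeg n).1 (thetaNeg n).2.1
        (thetaNeg n).2.2).choose_spec⟩

noncomputable def theta : ∀ i : ℤ, CZ.P i →ₗ[S] CX.P (i + 1) := fun i =>
  match i with
  | .ofNat n => (thetaPos CX CZ θ₀ θ₁ hR0 n).1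
  | .negSucc n => (thetaNeg CX CZ θ₀ θ₁ hR0 n).1

lemma theta_rel : ∀ (i : ℤ) (z : CZ.P i),
    CX.d (i + 1) (theta CX CZ θ₀ θ₁ hR0 i z)
      + theta CX CZ θ₀ θ₁ hR0 (i + 1) (CZ.d i z) = 0 := by
  intro i
  match i with
  | .ofNat n => exact (thetaPos CX CZ θ₀ θ₁ hR0 n).2.2
  | .negSucc 0 => exact (thetaNeg CX CZ θ₀ θ₁ hR0 0).2.2
  | .negSucc (m + 1) => exact (thetaNeg CX CZ θ₀ θ₁ hR0 (m + 1)).2.2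

lemma theta_zero : theta CX CZ θ₀ θ₁ hR0 0 = θ₀ := rfl

end Theta

open CompleteProjectiveResolution in
/-- Ext¹(Z, Q) = 0 for Z Gorenstein projective and Q projective, in concrete form:
maps to projectives extend along injections with Gorenstein projective cokernel. -/
lemma extend_along_of_gp {S : Type u} [Ring S] {X Y Z : Type u}
    [AddCommGroup X] [Module S X] [AddCommGroup Y] [Module S Y]
    [AddCommGroup Z] [Module S Z]
    (C : CompleteProjectiveResolution S Z)
    (u : X →ₗ[S] Y) (v : Y →ₗ[S] Z) (hu : Function.Injective u)
    (hv : Function.Surjective v) (huv : LinearMap.range u = LinearMap.ker v)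
    (Q : Type u) [AddCommGroup Q] [Module S Q] (hQ : Module.Projective S Q)
    (φ : X →ₗ[S] Q) : ∃ α : Y →ₗ[S] Q, ∀ x, α (u x) = φ x := by
  obtain ⟨eZ⟩ := C.equiv
  set p : C.P 0 →ₗ[S] Z := eZ.symm.toLinearMap ∘ₗ (C.d 0).rangeRestrict with hp
  have hpsurj : Function.Surjective p :=
    eZ.symm.surjective.comp (LinearMap.surjective_rangeRestrict _)
  have hpker : ∀ t : C.P 0, p t = 0 ↔ C.d 0 t = 0 := by
    intro t
    rw [hp]
    simp only [LinearMap.comp_apply, LinearEquiv.coe_coe]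
    rw [LinearEquiv.map_eq_zero_iff]
    constructor
    · intro h; exact congrArg Subtype.val h
    · intro h; exact Subtype.ext h
  haveI := C.projective 0
  obtain ⟨σ, hσ⟩ := Module.projective_lifting_property v p hv
  have hσ' : ∀ t, v (σ t) = p t := fun t => LinearMap.congr_fun hσ t
  -- τ : ker (d 0) → X with u (τ t) = σ t
  set u' := LinearEquiv.ofInjective u hu with hu'
  have hmem : ∀ t : ↥(LinearMap.ker (C.d 0)), σ t.1 ∈ LinearMap.range u := by
    intro t
    rw [huv, LinearMap.mem_ker, hσ', hpker]
    exact t.2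
  set τ : ↥(LinearMap.ker (C.d 0)) →ₗ[S] X :=
    u'.symm.toLinearMap ∘ₗ
      LinearMap.codRestrict _ (σ ∘ₗ (LinearMap.ker (C.d 0)).subtype) hmem with hτ
  have hτ' : ∀ t : ↥(LinearMap.ker (C.d 0)), u (τ t) = σ t.1 := by
    intro t
    have h1 : u' (τ t) = ⟨σ t.1, hmem t⟩ := by
      rw [hτ]; exact u'.apply_symm_apply _
    have h2 : (u' (τ t) : Y) = u (τ t) := by rw [hu']; rfl
    rw [← h2, h1]
  -- extend φ ∘ τ to ρ on C.P 0, using ker (d 0) = range (d (negSucc 0))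
  have hk : LinearMap.ker (C.d 0) = LinearMap.range (C.d (Int.negSucc 0)) :=
    C.ker_eq (Int.negSucc 0)
  obtain ⟨ρ, hρ⟩ := C.extend_from_range (Int.negSucc 1) Q hQ
    ((φ ∘ₗ τ) ∘ₗ (LinearEquiv.ofEq _ _ hk.symm).toLinearMap)
  obtain ⟨ρ0, hρ0⟩ : ∃ ρ0 : C.P 0 →ₗ[S] Q,
      ∀ (t : C.P 0) (ht : t ∈ LinearMap.ker (C.d 0)), ρ0 t = φ (τ ⟨t, ht⟩) := by
    refine ⟨ρ, ?_⟩
    intro t ht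
    have ht' : t ∈ LinearMap.range (C.d (Int.negSucc 0)) := hk ▸ ht
    have h2 := hρ t ht'
    refine h2.trans ?_
    simp only [LinearMap.comp_apply, LinearEquiv.coe_coe]
    congr 1
  -- glue
  set q : (C.P 0 × X) →ₗ[S] Y := LinearMap.coprod σ u with hq
  have hqsurj : Function.Surjective q := by
    intro y
    obtain ⟨t, ht⟩ := hpsurj (v y)
    have : v (y - σ t) = 0 := by rw [map_sub, hσ' t, ht, sub_self]
    have : y - σ t ∈ LinearMap.range u := by rw [huv]; exact this
    obtain ⟨x, hx⟩ := this
    exact ⟨(t, x), by simp [hq, hx]⟩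
  set F : (C.P 0 × X) →ₗ[S] Q := LinearMap.coprod ρ0 φ with hFdef
  have hle : LinearMap.ker q ≤ LinearMap.ker F := by
    rintro ⟨t, x⟩ hker
    have h0 : σ t + u x = 0 := hker
    have hvt : v (σ t) = 0 := by
      have : v (σ t) + v (u x) = 0 := by rw [← map_add, h0, map_zero]
      have hvu : v (u x) = 0 := by
        have : u x ∈ LinearMap.ker v := huv ▸ LinearMap.mem_range_self u x
        exact this
      rw [hvu, add_zero] at this; exact this
    have htk : t ∈ LinearMap.ker (C.d 0) := by
      rw [LinearMap.mem_ker, ← hpker, ← hσ' t]; exact hvt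
    have hσt : σ t = u (τ ⟨t, htk⟩) := (hτ' ⟨t, htk⟩).symm
    have hx : x = -τ ⟨t, htk⟩ := by
      apply hu
      rw [map_neg, ← hσt]
      exact eq_neg_of_add_eq_zero_right h0
    show F (t, x) = 0
    rw [hFdef]
    simp only [LinearMap.coprod_apply]
    rw [hρ0 t htk, hx, map_neg, add_neg_cancel]
  set e := q.quotKerEquivOfSurjective hqsurj with he
  refine ⟨(Submodule.liftQ (LinearMap.ker q) F hle) ∘ₗ e.symm.toLinearMap, fun x => ?_⟩
  have h1 : q (0, x) = u x := by simp [hq]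
  have h2 : e (Submodule.Quotient.mk (0, x)) = q (0, x) := rfl
  have h3 : e.symm (u x) = Submodule.Quotient.mk (0, x) := by
    rw [← h1, ← h2, e.symm_apply_apply]
  simp only [LinearMap.comp_apply, LinearEquiv.coe_coe, h3, Submodule.liftQ_apply]
  rw [hFdef]
  simp

open CompleteProjectiveResolution in
/-- The class of Gorenstein projective modules is closed under extensions. -/
theorem gp_extension {S : Type u} [Ring S] {X Y Z : Type u}
    [AddCommGroup X] [Module S X] [AddCommGroup Y] [Module S Y]
    [AddCommGroup Z] [Module S Z]
    (u : X →ₗ[S] Y) (v : Y →ₗ[S] Z) (hu : Function.Injective u)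
    (hv : Function.Surjective v) (huv : LinearMap.range u = LinearMap.ker v)
    (hX : IsGorensteinProjective S X) (hZ : IsGorensteinProjective S Z) :
    IsGorensteinProjective S Y := by
  obtain ⟨CX⟩ := hX
  obtain ⟨CZ⟩ := hZ
  obtain ⟨eX⟩ := CX.equiv
  obtain ⟨eZ⟩ := CZ.equiv
  set ν : X →ₗ[S] CX.P (0 + 1) :=
    (LinearMap.range (CX.d 0)).subtype ∘ₗ eX.toLinearMap with hν
  obtain ⟨α, hα⟩ := extend_along_of_gp CZ u v hu hv huv (CX.P (0 + 1)) (CX.projective (0 + 1)) ν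
  have hkill : LinearMap.range u ≤ LinearMap.ker ((CX.d (0 + 1)).rangeRestrict ∘ₗ α) := by
    rintro _ ⟨x, rfl⟩
    show (CX.d (0 + 1)).rangeRestrict (α (u x)) = 0
    apply Subtype.ext
    show CX.d (0 + 1) (α (u x)) = 0
    rw [hα x]
    have hm : ν x ∈ LinearMap.ker (CX.d (0 + 1)) := by
      rw [CX.ker_eq 0]; exact (eX x).2
    exact hm
  set qv : (Y ⧸ LinearMap.range u) ≃ₗ[S] Z :=
    (Submodule.quotEquivOfEq _ _ huv).trans (v.quotKerEquivOfSurjective hv) with hqv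
  set ω : ↥(LinearMap.range (CZ.d 0)) →ₗ[S] ↥(LinearMap.range (CX.d (0 + 1))) :=
    (Submodule.liftQ _ ((CX.d (0 + 1)).rangeRestrict ∘ₗ α) hkill) ∘ₗ qv.symm.toLinearMap
      ∘ₗ eZ.symm.toLinearMap with hωdef
  have hω : ∀ y : Y, ω (eZ (v y)) = (CX.d (0 + 1)).rangeRestrict (α y) := by
    intro y
    rw [hωdef]
    simp only [LinearMap.comp_apply, LinearEquiv.coe_coe, LinearEquiv.symm_apply_apply]
    have h1 : qv.symm (v y) = Submodule.Quotient.mk y := by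
      apply qv.injective
      rw [qv.apply_symm_apply]
      rfl
    rw [h1, Submodule.liftQ_apply]
    rfl
  obtain ⟨ωh, hωh⟩ := CZ.extend_from_range (Int.negSucc 0) (CX.P (0 + 1 + 1))
    (CX.projective _) ((LinearMap.range (CX.d (0 + 1))).subtype ∘ₗ ω)
  obtain ⟨ωh0, hωh0⟩ : ∃ w : CZ.P (0 + 1) →ₗ[S] CX.P (0 + 1 + 1),
      ∀ (x : CZ.P (0 + 1)) (hx : x ∈ LinearMap.range (CZ.d 0)),
        w x = ((LinearMap.range (CX.d (0 + 1))).subtype ∘ₗ ω) ⟨x, hx⟩ :=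
    ⟨ωh, fun x hx => hωh x hx⟩
  have hmem0 : ∀ z : CZ.P 0, (ωh0 ∘ₗ CZ.d 0) z ∈ LinearMap.range (CX.d (0 + 1)) := by
    intro z
    show ωh0 (CZ.d 0 z) ∈ _
    rw [hωh0 (CZ.d 0 z) ⟨z, rfl⟩]
    exact (ω ⟨CZ.d 0 z, ⟨z, rfl⟩⟩).2
  haveI := CZ.projective 0
  obtain ⟨θ₀, hθ₀⟩ := Module.projective_lifting_property (CX.d (0 + 1)).rangeRestrict
    (LinearMap.codRestrict _ (ωh0 ∘ₗ CZ.d 0) hmem0) (LinearMap.surjective_rangeRestrict _)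
  have hθ₀' : ∀ z, CX.d (0 + 1) (θ₀ z) = ωh0 (CZ.d 0 z) := fun z =>
    congrArg Subtype.val (LinearMap.congr_fun hθ₀ z)
  have hR0 : ∀ z, CX.d (0 + 1) (θ₀ z) + (-ωh0) (CZ.d 0 z) = 0 := by
    intro z; rw [hθ₀' z]; exact add_neg_cancel (ωh0 (CZ.d 0 z))
  set θ := theta CX CZ θ₀ (-ωh0) hR0 with hθdef
  have hR : ∀ (i : ℤ) (z : CZ.P i),
      CX.d (i + 1) (θ i z) + θ (i + 1) (CZ.d i z) = 0 := theta_rel CX CZ θ₀ (-ωh0) hR0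
  have hθ0' : ∀ z, CX.d (0 + 1) (θ 0 z) = ωh0 (CZ.d 0 z) := fun z => hθ₀' z
  -- the total complex
  set dY : ∀ i : ℤ, (CX.P i × CZ.P i) →ₗ[S] (CX.P (i + 1) × CZ.P (i + 1)) := fun i =>
    LinearMap.prod
      ((CX.d i) ∘ₗ (LinearMap.fst S (CX.P i) (CZ.P i))
        + (θ i) ∘ₗ (LinearMap.snd S (CX.P i) (CZ.P i)))
      ((CZ.d i) ∘ₗ (LinearMap.snd S (CX.P i) (CZ.P i))) with hdY
  have dY_apply : ∀ (i : ℤ) (w : CX.P i × CZ.P i),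
      dY i w = (CX.d i w.1 + θ i w.2, CZ.d i w.2) := fun i w => rfl
  -- exactness
  have hexact : ∀ i, LinearMap.range (dY i) = LinearMap.ker (dY (i + 1)) := by
    intro i
    apply le_antisymm
    · rintro _ ⟨⟨x, z⟩, rfl⟩
      rw [LinearMap.mem_ker]
      have h1 : CX.d (i + 1) (CX.d i x + θ i z) + θ (i + 1) (CZ.d i z) = 0 := by
        rw [map_add, CX.d_d i x, zero_add]
        exact hR i z
      have h2 : CZ.d (i + 1) (CZ.d i z) = 0 := CZ.d_d i z
      have h3 : dY (i + 1) (dY i (x, z))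
          = (CX.d (i + 1) (CX.d i x + θ i z) + θ (i + 1) (CZ.d i z),
             CZ.d (i + 1) (CZ.d i z)) := rfl
      rw [h3, h1, h2]
      rfl
    · rintro ⟨x1, z1⟩ hker
      rw [LinearMap.mem_ker] at hker
      have hk1 : CX.d (i + 1) x1 + θ (i + 1) z1 = 0 := congrArg Prod.fst hker
      have hk2 : CZ.d (i + 1) z1 = 0 := congrArg Prod.snd hker
      have hz1 : z1 ∈ LinearMap.range (CZ.d i) := by rw [← CZ.ker_eq i]; exact hk2
      obtain ⟨z, hz⟩ := hz1
      have hx1 : CX.d (i + 1) (x1 - θ i z) = 0 := by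
        rw [map_sub]
        have h3 : CX.d (i + 1) (θ i z) = -(θ (i + 1) (CZ.d i z)) :=
          eq_neg_of_add_eq_zero_left (hR i z)
        rw [h3, hz, sub_neg_eq_add]
        exact hk1
      have hx1' : x1 - θ i z ∈ LinearMap.range (CX.d i) := by rw [← CX.ker_eq i]; exact hx1
      obtain ⟨x, hx⟩ := hx1'
      refine ⟨(x, z), ?_⟩
      rw [dY_apply]
      refine Prod.ext ?_ ?_
      · show CX.d i x + θ i z = x1
        rw [hx]; abel
      · exact hz
  -- hom-exactness
  have hhomexact : ∀ (Q : Type u) [AddCommGroup Q] [Module S Q], Module.Projective S Q →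
      ∀ i (f : (CX.P (i + 1) × CZ.P (i + 1)) →ₗ[S] Q), f.comp (dY i) = 0 →
        ∃ g : (CX.P (i + 1 + 1) × CZ.P (i + 1 + 1)) →ₗ[S] Q, g.comp (dY (i + 1)) = f := by
    intro Q _ _ hQ i f hf
    set fX := f ∘ₗ (LinearMap.inl S (CX.P (i + 1)) (CZ.P (i + 1))) with hfX
    set fZ := f ∘ₗ (LinearMap.inr S (CX.P (i + 1)) (CZ.P (i + 1))) with hfZ
    have fsplit : ∀ (a : CX.P (i + 1)) (b : CZ.P (i + 1)), f (a, b) = fX a + fZ b := by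
      intro a b
      rw [hfX, hfZ]
      simp only [LinearMap.comp_apply, LinearMap.inl_apply, LinearMap.inr_apply]
      rw [← map_add]
      congr 1
      simp [Prod.ext_iff]
    have hf' : ∀ w, f (dY i w) = 0 := fun w => LinearMap.congr_fun hf w
    have hfX0 : fX.comp (CX.d i) = 0 := by
      ext x
      have h5 := hf' (x, 0)
      rw [dY_apply] at h5
      simp only [map_zero, add_zero] at h5
      exact h5
    obtain ⟨gX, hgX⟩ := CX.homExact Q hQ i fX hfX0
    have hgX' : ∀ x, gX (CX.d (i + 1) x) = fX x := fun x => LinearMap.congr_fun hgX x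
    have hf'0 : (fZ - gX ∘ₗ θ (i + 1)).comp (CZ.d i) = 0 := by
      ext z
      simp only [LinearMap.comp_apply, LinearMap.sub_apply, LinearMap.zero_apply]
      have h1 : θ (i + 1) (CZ.d i z) = -(CX.d (i + 1) (θ i z)) :=
        eq_neg_of_add_eq_zero_right (hR i z)
      rw [h1, map_neg, hgX', sub_neg_eq_add]
      have h3 := hf' (0, z)
      rw [dY_apply] at h3
      simp only [map_zero, zero_add] at h3
      rw [fsplit] at h3
      rw [add_comm]
      exact h3
    obtain ⟨gZ, hgZ⟩ := CZ.homExact Q hQ i (fZ - gX ∘ₗ θ (i + 1)) hf'0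
    have hgZ' : ∀ z, gZ (CZ.d (i + 1) z) = fZ z - gX (θ (i + 1) z) := fun z => by
      have h6 := LinearMap.congr_fun hgZ z
      simpa using h6
    refine ⟨LinearMap.coprod gX gZ, ?_⟩
    apply LinearMap.ext
    rintro ⟨x, z⟩
    show (LinearMap.coprod gX gZ) (dY (i + 1) (x, z)) = f (x, z)
    rw [dY_apply]
    rw [LinearMap.coprod_apply]
    show gX (CX.d (i + 1) x + θ (i + 1) z) + gZ (CZ.d (i + 1) z) = f (x, z)
    rw [map_add, hgX', hgZ', fsplit]
    abel
  -- the comparison map ψ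
  set ψ : Y →ₗ[S] (CX.P (0 + 1) × CZ.P (0 + 1)) :=
    LinearMap.prod α ((LinearMap.range (CZ.d 0)).subtype ∘ₗ eZ.toLinearMap ∘ₗ v) with hψdef
  have hψ_apply : ∀ y, ψ y = (α y, (eZ (v y) : CZ.P (0 + 1))) := fun y => rfl
  have hψinj : Function.Injective ψ := by
    have key : ∀ y, ψ y = 0 → y = 0 := by
      intro y hy0
      rw [hψ_apply] at hy0
      have h1 : α y = 0 := congrArg Prod.fst hy0
      have h2 : (eZ (v y) : CZ.P (0 + 1)) = 0 := congrArg Prod.snd hy0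
      have h3 : v y = 0 := by
        have h4 : eZ (v y) = 0 := Subtype.ext h2
        simpa using eZ.map_eq_zero_iff.mp h4
      have h5 : y ∈ LinearMap.range u := by rw [huv]; exact h3
      obtain ⟨x, rfl⟩ := h5
      rw [hα x] at h1
      have h6 : eX x = 0 := Subtype.ext h1
      have h7 : x = 0 := by simpa using eX.map_eq_zero_iff.mp h6
      rw [h7, map_zero]
    intro y1 y2 hy
    have h8 := key (y1 - y2) (by rw [map_sub, hy, sub_self])
    exact sub_eq_zero.mp h8
  have hrange : LinearMap.range ψ = LinearMap.range (dY 0) := by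
    apply le_antisymm
    · rintro _ ⟨y, rfl⟩
      obtain ⟨z, hz⟩ := (eZ (v y)).2
      have hd : CX.d (0 + 1) (α y - θ 0 z) = 0 := by
        rw [map_sub]
        have e1 : CX.d (0 + 1) (α y)
            = ((CX.d (0 + 1)).rangeRestrict (α y) : CX.P (0 + 1 + 1)) := rfl
        have e2 : CX.d (0 + 1) (θ 0 z) = ωh0 (CZ.d 0 z) := hθ0' z
        rw [e1, ← hω y, e2, hz]
        rw [hωh0 ((eZ (v y)) : CZ.P (0 + 1)) (eZ (v y)).2]
        exact sub_self _
      have hd' : α y - θ 0 z ∈ LinearMap.range (CX.d 0) := by rw [← CX.ker_eq 0]; exact hd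
      obtain ⟨x, hx⟩ := hd'
      refine ⟨(x, z), ?_⟩
      rw [dY_apply, hψ_apply]
      refine Prod.ext ?_ ?_
      · show CX.d 0 x + θ 0 z = α y
        rw [hx]; abel
      · exact hz
    · rintro _ ⟨⟨x, z⟩, rfl⟩
      obtain ⟨y₀, hy₀⟩ := hv (eZ.symm ⟨CZ.d 0 z, ⟨z, rfl⟩⟩)
      have h6 : eZ (v y₀) = ⟨CZ.d 0 z, ⟨z, rfl⟩⟩ := by rw [hy₀, eZ.apply_symm_apply]
      have hdiff : CX.d (0 + 1) (CX.d 0 x + θ 0 z - α y₀) = 0 := by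
        have hq1 : CX.d (0 + 1) (CX.d 0 x) = 0 := CX.d_d 0 x
        have hq2 : CX.d (0 + 1) (θ 0 z) = CX.d (0 + 1) (α y₀) := by
          have e2 : CX.d (0 + 1) (θ 0 z) = ωh0 (CZ.d 0 z) := hθ0' z
          have e3 : CX.d (0 + 1) (α y₀)
              = ((CX.d (0 + 1)).rangeRestrict (α y₀) : CX.P (0 + 1 + 1)) := rfl
          rw [e2, e3, ← hω y₀, h6]
          rw [hωh0 (CZ.d 0 z) ⟨z, rfl⟩]
          rfl
        rw [map_sub, map_add, hq1, hq2]
        abel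
      have hdiff' : CX.d 0 x + θ 0 z - α y₀ ∈ LinearMap.range (CX.d 0) := by
        rw [← CX.ker_eq 0]; exact hdiff
      refine ⟨y₀ + u (eX.symm ⟨CX.d 0 x + θ 0 z - α y₀, hdiff'⟩), ?_⟩
      rw [hψ_apply, dY_apply]
      have hvux : v (u (eX.symm ⟨CX.d 0 x + θ 0 z - α y₀, hdiff'⟩)) = 0 := by
        have h9 : u (eX.symm ⟨CX.d 0 x + θ 0 z - α y₀, hdiff'⟩) ∈ LinearMap.ker v := by
          rw [← huv]; exact LinearMap.mem_range_self u _
        exact h9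
      refine Prod.ext ?_ ?_
      · show α (y₀ + u (eX.symm ⟨CX.d 0 x + θ 0 z - α y₀, hdiff'⟩)) = CX.d 0 x + θ 0 z
        rw [map_add, hα]
        have h10 : ν (eX.symm ⟨CX.d 0 x + θ 0 z - α y₀, hdiff'⟩)
            = CX.d 0 x + θ 0 z - α y₀ := by
          rw [hν]
          simp only [LinearMap.comp_apply, LinearEquiv.coe_coe]
          rw [eX.apply_symm_apply]
          rfl
        rw [h10]
        abel
      · show ((eZ (v (y₀ + u (eX.symm ⟨CX.d 0 x + θ 0 z - α y₀, hdiff'⟩)))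
            : CZ.P (0 + 1))) = CZ.d 0 z
        rw [map_add, hvux, add_zero, h6]
  exact ⟨⟨fun i => CX.P i × CZ.P i,
    fun i => by haveI := CX.projective i; haveI := CZ.projective i; infer_instance,
    dY, hexact, hhomexact,
    ⟨(LinearEquiv.ofInjective ψ hψinj).trans (LinearEquiv.ofEq _ _ hrange)⟩⟩⟩

open CompleteProjectiveResolution in
/-- Given an exact sequence `0 → A → G₁ → G₀ → M → 0` of left `R`-modules
with `G₀` and `G₁` Gorenstein projective, there exists an exact sequence
`0 → A → P → G → M → 0` with `P` projective and `G` Gorenstein projective. -/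
theorem exists_exact_four_term_projective_gorenstein
    (R : Type u) [Ring R]
    (A G₁ G₀ M : Type u) [AddCommGroup A] [Module R A] [AddCommGroup G₁] [Module R G₁]
    [AddCommGroup G₀] [Module R G₀] [AddCommGroup M] [Module R M]
    (f : A →ₗ[R] G₁) (g : G₁ →ₗ[R] G₀) (h : G₀ →ₗ[R] M)
    (hf : Function.Injective f) (hh : Function.Surjective h)
    (hfg : LinearMap.range f = LinearMap.ker g)
    (hgh : LinearMap.range g = LinearMap.ker h)
    (hG₁ : IsGorensteinProjective R G₁) (hG₀ : IsGorensteinProjective R G₀) :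
    ∃ (P G : Type u) (_ : AddCommGroup P) (_ : Module R P) (_ : AddCommGroup G) (_ : Module R G),
      Module.Projective R P ∧ IsGorensteinProjective R G ∧
      ∃ (a : A →ₗ[R] P) (b : P →ₗ[R] G) (c : G →ₗ[R] M),
        Function.Injective a ∧ Function.Surjective c ∧
        LinearMap.range a = LinearMap.ker b ∧ LinearMap.range b = LinearMap.ker c := by
  obtain ⟨C1⟩ := hG₁
  obtain ⟨e1⟩ := C1.equiv
  set Pm := C1.P (0 + 1) with hPm
  set ι : G₁ →ₗ[R] Pm := (LinearMap.range (C1.d 0)).subtype ∘ₗ e1.toLinearMap with hι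
  have hιinj : Function.Injective ι := by
    intro a b hab
    exact e1.injective (Subtype.ext hab)
  set Gsub := LinearMap.range (C1.d (0 + 1)) with hGsub
  set π : Pm →ₗ[R] ↥Gsub := (C1.d (0 + 1)).rangeRestrict with hπ
  have hπsurj : Function.Surjective π := LinearMap.surjective_rangeRestrict _
  have hπker : ∀ p : Pm, π p = 0 ↔ p ∈ LinearMap.range (C1.d 0) := by
    intro p
    rw [← C1.ker_eq 0]
    constructor
    · intro hp; exact congrArg Subtype.val hp
    · intro hp; exact Subtype.ext hp
  -- the pushout of ι and g
  set W := LinearMap.range (LinearMap.prod ι (-g)) with hW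
  set D := (Pm × G₀) ⧸ W with hD
  have hWmem : ∀ w : Pm × G₀, w ∈ W ↔ ∃ x : G₁, ι x = w.1 ∧ -(g x) = w.2 := by
    intro w
    constructor
    · rintro ⟨x, rfl⟩; exact ⟨x, rfl, rfl⟩
    · rintro ⟨x, h1, h2⟩; exact ⟨x, Prod.ext h1 h2⟩
  set aP : A →ₗ[R] Pm := ι ∘ₗ f with haP
  set bP : Pm →ₗ[R] D := W.mkQ ∘ₗ LinearMap.inl R Pm G₀ with hbP
  have hWle : W ≤ LinearMap.ker (h ∘ₗ LinearMap.snd R Pm G₀) := by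
    rintro _ ⟨x, rfl⟩
    show h (-(g x)) = 0
    rw [map_neg]
    have hx : h (g x) = 0 := by
      have : g x ∈ LinearMap.ker h := hgh ▸ LinearMap.mem_range_self g x
      exact this
    rw [hx, neg_zero]
  set cP : D →ₗ[R] M := Submodule.liftQ W (h ∘ₗ LinearMap.snd R Pm G₀) hWle with hcP
  have hainj : Function.Injective aP := fun a b hab' => hf (hιinj hab')
  have hcsurj : Function.Surjective cP := by
    intro m
    obtain ⟨y, hy⟩ := hh m
    refine ⟨W.mkQ (0, y), ?_⟩
    rw [hcP, Submodule.mkQ_apply, Submodule.liftQ_apply]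
    exact hy
  have hab : LinearMap.range aP = LinearMap.ker bP := by
    apply le_antisymm
    · rintro _ ⟨x, rfl⟩
      show W.mkQ (ι (f x), 0) = 0
      rw [Submodule.mkQ_apply, Submodule.Quotient.mk_eq_zero]
      refine (hWmem _).2 ⟨f x, rfl, ?_⟩
      show -(g (f x)) = 0
      have hgf : g (f x) = 0 := by
        have : f x ∈ LinearMap.ker g := hfg ▸ LinearMap.mem_range_self f x
        exact this
      rw [hgf, neg_zero]
    · intro p hp
      have hmemW : (p, (0 : G₀)) ∈ W := by
        have hp0 : W.mkQ (p, (0 : G₀)) = 0 := hp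
        rwa [Submodule.mkQ_apply, Submodule.Quotient.mk_eq_zero] at hp0
      obtain ⟨x, h1, h2⟩ := (hWmem _).1 hmemW
      have hgx : g x = 0 := by rw [← neg_neg (g x), h2, neg_zero]
      have hxr : x ∈ LinearMap.range f := by rw [hfg]; exact hgx
      obtain ⟨a, rfl⟩ := hxr
      exact ⟨a, h1⟩
  have hbc : LinearMap.range bP = LinearMap.ker cP := by
    apply le_antisymm
    · rintro _ ⟨p, rfl⟩
      show cP (W.mkQ (p, 0)) = 0
      rw [hcP, Submodule.mkQ_apply, Submodule.liftQ_apply]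
      show h 0 = 0
      exact map_zero h
    · intro dd hdd
      obtain ⟨⟨p, y⟩, rfl⟩ := Submodule.mkQ_surjective W dd
      have hy : h y = 0 := by
        have := hdd
        rwa [LinearMap.mem_ker, hcP, Submodule.mkQ_apply, Submodule.liftQ_apply] at this
      have hyr : y ∈ LinearMap.range g := by rw [hgh]; exact hy
      obtain ⟨x, hx⟩ := hyr
      refine ⟨p + ι x, ?_⟩
      show W.mkQ (p + ι x, 0) = W.mkQ (p, y)
      rw [Submodule.mkQ_apply, Submodule.mkQ_apply, Submodule.Quotient.eq]
      refine (hWmem _).2 ⟨x, ?_, ?_⟩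
      · show ι x = (p + ι x, (0 : G₀)).1 - (p, y).1
        simp
      · show -(g x) = (p + ι x, (0 : G₀)).2 - (p, y).2
        rw [hx]; simp
  -- the extension 0 → G₀ → D → Gsub → 0
  set uD : G₀ →ₗ[R] D := W.mkQ ∘ₗ LinearMap.inr R Pm G₀ with huD
  have huDinj : Function.Injective uD := by
    have key : ∀ y, uD y = 0 → y = 0 := by
      intro y hy
      have hmemW : ((0 : Pm), y) ∈ W := by
        have hy0 : W.mkQ ((0 : Pm), y) = 0 := hy
        rwa [Submodule.mkQ_apply, Submodule.Quotient.mk_eq_zero] at hy0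
      obtain ⟨x, h1, h2⟩ := (hWmem _).1 hmemW
      have h1' : ι x = 0 := h1
      have h2' : -(g x) = y := h2
      have hx0 : x = 0 := hιinj (by rw [h1', map_zero])
      rw [← h2', hx0, map_zero, neg_zero]
    intro y1 y2 hy
    have h9 := key (y1 - y2) (by rw [map_sub, hy, sub_self])
    exact sub_eq_zero.mp h9
  have hWle2 : W ≤ LinearMap.ker (π ∘ₗ LinearMap.fst R Pm G₀) := by
    rintro _ ⟨x, rfl⟩
    show π (ι x) = 0
    exact (hπker _).2 (e1 x).2
  set vD : D →ₗ[R] ↥Gsub := Submodule.liftQ W (π ∘ₗ LinearMap.fst R Pm G₀) hWle2 with hvD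
  have hvDsurj : Function.Surjective vD := by
    intro γ
    obtain ⟨p, hp⟩ := hπsurj γ
    refine ⟨W.mkQ (p, 0), ?_⟩
    rw [hvD, Submodule.mkQ_apply, Submodule.liftQ_apply]
    exact hp
  have huvD : LinearMap.range uD = LinearMap.ker vD := by
    apply le_antisymm
    · rintro _ ⟨y, rfl⟩
      show vD (W.mkQ (0, y)) = 0
      rw [hvD, Submodule.mkQ_apply, Submodule.liftQ_apply]
      show π 0 = 0
      exact map_zero π
    · intro dd hdd
      obtain ⟨⟨p, y⟩, rfl⟩ := Submodule.mkQ_surjective W dd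
      have hp : π p = 0 := by
        rwa [LinearMap.mem_ker, hvD, Submodule.mkQ_apply, Submodule.liftQ_apply] at hdd
      have hpr : p ∈ LinearMap.range (C1.d 0) := (hπker p).1 hp
      obtain ⟨x, hx⟩ : ∃ x : G₁, ι x = p := ⟨e1.symm ⟨p, hpr⟩, by
        show ((e1 (e1.symm ⟨p, hpr⟩)) : Pm) = p
        rw [e1.apply_symm_apply]⟩
      refine ⟨y + g x, ?_⟩
      show W.mkQ (0, y + g x) = W.mkQ (p, y)
      rw [Submodule.mkQ_apply, Submodule.mkQ_apply, Submodule.Quotient.eq]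
      refine (hWmem _).2 ⟨-x, ?_, ?_⟩
      · show ι (-x) = ((0 : Pm), y + g x).1 - (p, y).1
        rw [map_neg, hx]; simp
      · show -(g (-x)) = ((0 : Pm), y + g x).2 - (p, y).2
        rw [map_neg, neg_neg]; simp
  have hDGP : IsGorensteinProjective R D :=
    gp_extension uD vD huDinj hvDsurj huvD hG₀ ⟨C1.shiftOne⟩
  exact ⟨Pm, D, inferInstance, inferInstance, inferInstance, inferInstance,
    C1.projective (0 + 1), hDGP, aP, bP, cP, hainj, hcsurj, hab, hbc⟩
end

section
/- Let R be a ring and let 0 → A → G₁ → G₀ → M → 0 be an exact sequence of left R-modules with G₀ and G₁ Gorenstein projective. Then there exists an exact sequence 0 → A → H → Q → M → 0 of left R-modules with Q projective and H Gorenstein projective. -/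
universe u

open LinearMap

/-!
Since `G₀` is Gorenstein projective, it is a quotient `P → G₀` of a projective module by a
Gorenstein projective kernel `K`. The pullback `H = G₁ ×_{G₀} P` is an extension of `G₁` by `K`,
and `0 → A → H → P → M → 0` is exact.

It remains to see that Gorenstein projective modules are closed under extensions. A complete
resolution is the same as a chain of short exact sequences `0 → Zₙ → Pₙ → Zₙ₊₁ → 0` with `Pₙ`
projective which stay exact under `Hom(-, Q)` for projective `Q`. Given such chains for the outer
terms of `0 → X' → X → X'' → 0`, the horseshoe lemma produces one for `X` with middle terms
`P'ₙ × P''ₙ`: to the left by lifting along the projective `P''ₙ`, to the right by extending into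
the projective `P'ₙ`, which works because `Ext¹(Z''ₙ, Q) = 0` for projective `Q`.
-/

namespace GorensteinProjective

section LinearAlgebra

variable {S : Type*} [Ring S] {A B C D : Type*} [AddCommGroup A] [Module S A] [AddCommGroup B]
  [Module S B] [AddCommGroup C] [Module S C] [AddCommGroup D] [Module S D]

theorem exists_comp_eq_of_ker_le {g : B →ₗ[S] C} (hg : Function.Surjective g) {ψ : B →ₗ[S] D}
    (h : g.ker ≤ ψ.ker) : ∃ β : C →ₗ[S] D, β ∘ₗ g = ψ :=
  ⟨g.ker.liftQ ψ h ∘ₗ (g.quotKerEquivOfSurjective hg).symm.toLinearMap, by ext; simp⟩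

theorem exists_comp_eq_of_range_le {a : A →ₗ[S] B} (ha : Function.Injective a) {χ : C →ₗ[S] B}
    (h : χ.range ≤ a.range) : ∃ δ : C →ₗ[S] A, a ∘ₗ δ = χ :=
  ⟨(LinearEquiv.ofInjective a ha).symm.toLinearMap ∘ₗ χ.codRestrict a.range (fun _ => h ⟨_, rfl⟩),
    by ext; simp [LinearEquiv.ofInjective_symm_apply]⟩

theorem coprod_surjective_of_exact {a : A →ₗ[S] B} {b : B →ₗ[S] C} (hab : Function.Exact a b)
    {χ : D →ₗ[S] B} (hχ : Function.Surjective (b ∘ₗ χ)) : Function.Surjective (a.coprod χ) := by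
  intro y
  obtain ⟨w, hw⟩ := hχ (b y)
  obtain ⟨z, hz⟩ := (hab (y - χ w)).1 (by simpa [sub_eq_zero] using hw.symm)
  exact ⟨(z, w), by simp [hz]⟩

end LinearAlgebra

section Proper

variable {S : Type*} [Ring S]

structure IsShortExact {A B C : Type*} [AddCommGroup A] [Module S A] [AddCommGroup B]
    [Module S B] [AddCommGroup C] [Module S C] (i : A →ₗ[S] B) (p : B →ₗ[S] C) : Prop where
  injective : Function.Injective i
  exact : Function.Exact i p
  surjective : Function.Surjective p

theorem IsShortExact.congr {A A₂ B C C₂ : Type*} [AddCommGroup A] [Module S A] [AddCommGroup A₂]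
    [Module S A₂] [AddCommGroup B] [Module S B] [AddCommGroup C] [Module S C] [AddCommGroup C₂]
    [Module S C₂] {i : A →ₗ[S] B} {p : B →ₗ[S] C} (h : IsShortExact i p) (e : A ≃ₗ[S] A₂)
    (e' : C ≃ₗ[S] C₂) : IsShortExact (i ∘ₗ e.symm.toLinearMap) (e'.toLinearMap ∘ₗ p) where
  injective := h.injective.comp e.symm.injective
  exact := LinearEquiv.postcomp_exact_iff_exact.2 (LinearEquiv.precomp_exact_iff_exact.2 h.exact)
  surjective := e'.surjective.comp h.surjective

variable {A B A' A'' P P' P'' Y : Type u} [AddCommGroup A] [Module S A] [AddCommGroup B]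
  [Module S B] [AddCommGroup A'] [Module S A'] [AddCommGroup A''] [Module S A'']
  [AddCommGroup P] [Module S P] [AddCommGroup P'] [Module S P'] [AddCommGroup P''] [Module S P'']
  [AddCommGroup Y] [Module S Y]

def ProjExtendable (f : A →ₗ[S] B) : Prop :=
  ∀ (Q : Type u) [AddCommGroup Q] [Module S Q] [Module.Projective S Q] (φ : A →ₗ[S] Q),
    ∃ ψ : B →ₗ[S] Q, ψ ∘ₗ f = φ

variable (S) in
/-- A short exact sequence that stays exact under `Hom(-, Q)` for every projective `Q`. -/
structure ProperSeq (A B C : Type u) [AddCommGroup A] [Module S A] [AddCommGroup B] [Module S B]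
    [AddCommGroup C] [Module S C] where
  i : A →ₗ[S] B
  p : B →ₗ[S] C
  isShortExact : IsShortExact i p
  extendable : ProjExtendable i

theorem ProjExtendable.prod_of_exact {a : A' →ₗ[S] Y} {b : Y →ₗ[S] A''}
    (hab : Function.Exact a b) (hb : Function.Surjective b) {ι' : A' →ₗ[S] P'}
    {ι'' : A'' →ₗ[S] P''} (h' : ProjExtendable ι') (h'' : ProjExtendable ι'')
    {j : Y →ₗ[S] P' × P''} (hinl : j ∘ₗ a = inl S P' P'' ∘ₗ ι')
    (hsnd : snd S P' P'' ∘ₗ j = ι'' ∘ₗ b) : ProjExtendable j := by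
  intro Q _ _ _ φ
  obtain ⟨α, hα⟩ := h' Q (φ ∘ₗ a)
  set ψ := φ - α ∘ₗ fst S P' P'' ∘ₗ j
  have hψ : b.ker ≤ ψ.ker := by
    rintro _ hy
    obtain ⟨x, rfl⟩ := (hab _).1 hy
    have h₁ := LinearMap.congr_fun hinl x
    have h₂ := LinearMap.congr_fun hα x
    simp only [comp_apply, inl_apply] at h₁ h₂
    simp [ψ, h₁, h₂]
  obtain ⟨β₀, hβ₀⟩ := exists_comp_eq_of_ker_le hb hψ
  obtain ⟨β, hβ⟩ := h'' Q β₀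
  refine ⟨α ∘ₗ fst S P' P'' + β ∘ₗ snd S P' P'', ?_⟩
  simp only [add_comp, comp_assoc, hsnd]
  rw [← comp_assoc b, hβ, hβ₀]
  exact add_sub_cancel _ _

/-- `Ext¹(A'', Q) = 0` for projective `Q`, read off a `Hom(-, Q)`-exact projective
presentation of `A''`. -/
theorem ProjExtendable.of_presentation {a : A' →ₗ[S] Y} {b : Y →ₗ[S] A''}
    (hab : IsShortExact a b) [Module.Projective S P] (s : ProperSeq S B P A'') :
    ProjExtendable a := by
  obtain ⟨χ, hχ⟩ := Module.projective_lifting_property b s.p hab.surjective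
  have hbχ (w : P) : b (χ w) = s.p w := LinearMap.congr_fun hχ w
  have hχι : (χ ∘ₗ s.i).range ≤ a.range := by
    rintro _ ⟨k, rfl⟩
    exact (hab.exact _).1 (by simp [hbχ, s.isShortExact.exact.apply_apply_eq_zero])
  obtain ⟨δ, hδ⟩ := exists_comp_eq_of_range_le hab.injective hχι
  have haδ (k : B) : a (δ k) = χ (s.i k) := LinearMap.congr_fun hδ k
  intro Q _ _ _ φ
  obtain ⟨e, he⟩ := s.extendable Q (φ ∘ₗ δ)
  have he' (k : B) : e (s.i k) = φ (δ k) := LinearMap.congr_fun he k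
  have hker : (a.coprod χ).ker ≤ (φ.coprod e).ker := by
    rintro ⟨z, w⟩ hzw
    have hw : s.p w = 0 := by
      simpa [hbχ, hab.exact.apply_apply_eq_zero] using congr(b $hzw)
    obtain ⟨k, rfl⟩ := (s.isShortExact.exact w).1 hw
    have hz : z = -δ k := hab.injective (by simpa [eq_neg_iff_add_eq_zero, haδ] using hzw)
    simp [hz, he']
  obtain ⟨Φ, hΦ⟩ := exists_comp_eq_of_ker_le
    (coprod_surjective_of_exact hab.exact (hχ ▸ s.isShortExact.surjective)) hker
  exact ⟨Φ, by rw [← coprod_inl a χ, ← comp_assoc, hΦ, coprod_inl]⟩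

end Proper

section Horseshoe

variable {S : Type*} [Ring S] {A' A'' B' B'' P' P'' Y : Type*} [AddCommGroup A'] [Module S A']
  [AddCommGroup A''] [Module S A''] [AddCommGroup B'] [Module S B'] [AddCommGroup B'']
  [Module S B''] [AddCommGroup P'] [Module S P'] [AddCommGroup P''] [Module S P'']
  [AddCommGroup Y] [Module S Y] {a : A' →ₗ[S] Y} {b : Y →ₗ[S] A''}

theorem exists_isShortExact_ker_of_horseshoe (ha : Function.Injective a)
    (hab : Function.Exact a b) {ι' : B' →ₗ[S] P'} {π' : P' →ₗ[S] A'} (h' : IsShortExact ι' π')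
    {ι'' : B'' →ₗ[S] P''} {π'' : P'' →ₗ[S] A''} (hι'' : Function.Injective ι'')
    (h'' : Function.Exact ι'' π'') {c : P' × P'' →ₗ[S] Y}
    (hc₁ : c ∘ₗ inl S P' P'' = a ∘ₗ π') (hc₂ : b ∘ₗ c = π'' ∘ₗ snd S P' P'') :
    ∃ (i : B' →ₗ[S] c.ker) (p : c.ker →ₗ[S] B''), IsShortExact i p ∧
      c.ker.subtype ∘ₗ i = inl S P' P'' ∘ₗ ι' ∧ snd S P' P'' ∘ₗ c.ker.subtype = ι'' ∘ₗ p := by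
  have hc (x : P') (y : P'') : c (x, y) = a (π' x) + c (0, y) := by
    rw [← comp_apply a π', ← hc₁, comp_apply, inl_apply, ← map_add, Prod.mk_add_mk, add_zero,
      zero_add]
  have hbc (x : P' × P'') : b (c x) = π'' x.2 := LinearMap.congr_fun hc₂ x
  let i : B' →ₗ[S] c.ker := (inl S P' P'' ∘ₗ ι').codRestrict c.ker fun z => by
    rw [mem_ker, comp_apply, inl_apply, hc, h'.exact.apply_apply_eq_zero, Prod.mk_zero_zero]
    simp
  have hsnd : (snd S P' P'' ∘ₗ c.ker.subtype).range ≤ ι''.range := by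
    rintro _ ⟨x, rfl⟩
    exact (h'' _).1 (by simpa [x.2] using (hbc x).symm)
  obtain ⟨p, hp⟩ := exists_comp_eq_of_range_le hι'' hsnd
  have hp' (x : c.ker) : ι'' (p x) = (x : P' × P'').2 := LinearMap.congr_fun hp x
  refine ⟨i, p, ⟨fun z₁ z₂ h => h'.injective congr(($h : P' × P'').1), fun x => ⟨fun hx => ?_, ?_⟩,
    fun z'' => ?_⟩, rfl, hp.symm⟩
  · have hx₂ : (x : P' × P'').2 = 0 := by rw [← hp', hx, map_zero]
    have hx₀ : c ((x : P' × P'').1, 0) = 0 := by rw [← hx₂]; exact x.2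
    rw [hc, Prod.mk_zero_zero, map_zero, add_zero] at hx₀
    have hx₁ : π' (x : P' × P'').1 = 0 := ha (by rwa [map_zero])
    obtain ⟨z, hz⟩ := (h'.exact _).1 hx₁
    exact ⟨z, Subtype.ext (Prod.ext hz hx₂.symm)⟩
  · rintro ⟨z, rfl⟩
    exact hι'' (by simp [hp', i])
  · obtain ⟨z, hz⟩ := (hab (c (0, ι'' z''))).1 (by simp [hbc, h''.apply_apply_eq_zero])
    obtain ⟨x, rfl⟩ := h'.surjective z
    exact ⟨⟨(-x, ι'' z''), by rw [mem_ker, hc, ← hz]; simp⟩, hι'' (by rw [hp'])⟩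

theorem injective_of_horseshoe (hab : Function.Exact a b) {ι' : A' →ₗ[S] P'}
    (hι' : Function.Injective ι') {ι'' : A'' →ₗ[S] P''} (hι'' : Function.Injective ι'')
    {u : Y →ₗ[S] P' × P''} (hu₁ : u ∘ₗ a = inl S P' P'' ∘ₗ ι')
    (hu₂ : snd S P' P'' ∘ₗ u = ι'' ∘ₗ b) : Function.Injective u := by
  rw [injective_iff_map_eq_zero]
  intro y hy
  have hby : ι'' (b y) = ι'' 0 := by simpa [hy] using (LinearMap.congr_fun hu₂ y).symm
  obtain ⟨z, rfl⟩ := (hab y).1 (hι'' hby)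
  have hz : ι' 0 = ι' z := by simpa [hy] using congr_arg Prod.fst (LinearMap.congr_fun hu₁ z)
  rw [← hι' hz, map_zero]

theorem exists_isShortExact_coker_of_horseshoe (hab : Function.Exact a b)
    (hb : Function.Surjective b) {ι' : A' →ₗ[S] P'} {π' : P' →ₗ[S] B'}
    (h' : Function.Exact ι' π') (hπ' : Function.Surjective π') {ι'' : A'' →ₗ[S] P''}
    {π'' : P'' →ₗ[S] B''} (h'' : IsShortExact ι'' π'')
    {u : Y →ₗ[S] P' × P''} (hu₁ : u ∘ₗ a = inl S P' P'' ∘ₗ ι')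
    (hu₂ : snd S P' P'' ∘ₗ u = ι'' ∘ₗ b) :
    ∃ (i : B' →ₗ[S] (P' × P'') ⧸ u.range) (p : (P' × P'') ⧸ u.range →ₗ[S] B''),
      IsShortExact i p := by
  have hua (z : A') : u (a z) = (ι' z, 0) := LinearMap.congr_fun hu₁ z
  have hu (y : Y) : (u y).2 = ι'' (b y) := LinearMap.congr_fun hu₂ y
  have hker : π'.ker ≤ (u.range.mkQ ∘ₗ inl S P' P'').ker := by
    intro x hx
    obtain ⟨z, rfl⟩ := (h' x).1 hx
    simpa using ⟨a z, hua z⟩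
  obtain ⟨i, hi⟩ := exists_comp_eq_of_ker_le hπ' hker
  have hi' (x : P') : i (π' x) = Submodule.Quotient.mk (x, 0) := LinearMap.congr_fun hi x
  let p := u.range.liftQ (π'' ∘ₗ snd S P' P'') <| by
    rintro _ ⟨y, rfl⟩
    simp [hu, h''.exact.apply_apply_eq_zero]
  refine ⟨i, p, ⟨?_, fun q => ?_, fun w => ?_⟩⟩
  · rw [injective_iff_map_eq_zero]
    intro w hw
    obtain ⟨x, rfl⟩ := hπ' w
    obtain ⟨y, hy⟩ := (Submodule.Quotient.mk_eq_zero _).1 (hi' x ▸ hw)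
    obtain ⟨z, rfl⟩ := (hab y).1 (h''.injective (by simp [← hu, hy]))
    exact (h' x).2 ⟨z, congr_arg Prod.fst ((hua z).symm.trans hy)⟩
  · obtain ⟨⟨x₁, x₂⟩, rfl⟩ := Submodule.Quotient.mk_surjective _ q
    refine ⟨fun hq => ?_, ?_⟩
    · obtain ⟨w, rfl⟩ := (h''.exact x₂).1 hq
      obtain ⟨y, rfl⟩ := hb w
      refine ⟨π' (x₁ - (u y).1), ?_⟩
      rw [hi', Submodule.Quotient.eq]
      exact ⟨-y, by ext <;> simp [hu]⟩
    · rintro ⟨w, hw⟩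
      obtain ⟨x, rfl⟩ := hπ' w
      rw [← hw, hi']
      simp [p]
  · obtain ⟨x, rfl⟩ := h''.surjective w
    exact ⟨Submodule.Quotient.mk (0, x), rfl⟩

end Horseshoe

section Extension

variable {S : Type u} [Ring S]

variable (S) in
structure Extension (A C : Type u) [AddCommGroup A] [Module S A] [AddCommGroup C] [Module S C] :
    Type (u + 1) where
  B : Type u
  [addCommGroup : AddCommGroup B]
  [module : Module S B]
  i : A →ₗ[S] B
  p : B →ₗ[S] C
  isShortExact : IsShortExact i p

attribute [instance] Extension.addCommGroup Extension.module

variable {A' A'' B' B'' P' P'' : Type u} [AddCommGroup A'] [Module S A'] [AddCommGroup A'']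
  [Module S A''] [AddCommGroup B'] [Module S B'] [AddCommGroup B''] [Module S B'']
  [AddCommGroup P'] [Module S P'] [AddCommGroup P''] [Module S P''] (m : Extension S A' A'')

theorem Extension.nonempty_syzygy (s' : ProperSeq S B' P' A') (s'' : ProperSeq S B'' P'' A'')
    [Module.Projective S P''] :
    Nonempty ((m' : Extension S B' B'') × ProperSeq S m'.B (P' × P'') m.B) := by
  obtain ⟨l, hl⟩ := Module.projective_lifting_property m.p s''.p m.isShortExact.surjective
  let c := (m.i ∘ₗ s'.p).coprod l
  have hc : Function.Surjective c := coprod_surjective_of_exact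
    ((Function.Surjective.comp_exact_iff_exact s'.isShortExact.surjective).2 m.isShortExact.exact)
    (hl ▸ s''.isShortExact.surjective)
  have hl' (y : P'') : m.p (l y) = s''.p y := LinearMap.congr_fun hl y
  have hpc : m.p ∘ₗ c = s''.p ∘ₗ snd S P' P'' := by
    ext <;> simp [c, m.isShortExact.exact.apply_apply_eq_zero, hl']
  obtain ⟨i, p, hip, hi, hp⟩ := exists_isShortExact_ker_of_horseshoe m.isShortExact.injective
    m.isShortExact.exact s'.isShortExact s''.isShortExact.injective s''.isShortExact.exact
    (coprod_inl _ _) hpc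
  exact ⟨⟨⟨c.ker, i, p, hip⟩, ⟨c.ker.subtype, c,
    ⟨c.ker.injective_subtype, exact_subtype_ker_map c, hc⟩,
    .prod_of_exact hip.exact hip.surjective s'.extendable s''.extendable hi hp⟩⟩⟩

theorem Extension.nonempty_cosyzygy (hm : ProjExtendable m.i) (s' : ProperSeq S A' P' B')
    (s'' : ProperSeq S A'' P'' B'') [Module.Projective S P'] :
    Nonempty ((m' : Extension S B' B'') × ProperSeq S m.B (P' × P'') m'.B) := by
  obtain ⟨Φ, hΦ⟩ := hm P' s'.i
  let u := Φ.prod (s''.i ∘ₗ m.p)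
  have hu₁ : u ∘ₗ m.i = inl S P' P'' ∘ₗ s'.i := by
    ext x
    · exact LinearMap.congr_fun hΦ x
    · simp [u, m.isShortExact.exact.apply_apply_eq_zero]
  have hu₂ : snd S P' P'' ∘ₗ u = s''.i ∘ₗ m.p := snd_prod _ _
  obtain ⟨i, p, hip⟩ := exists_isShortExact_coker_of_horseshoe m.isShortExact.exact
    m.isShortExact.surjective s'.isShortExact.exact s'.isShortExact.surjective s''.isShortExact
    hu₁ hu₂
  exact ⟨⟨⟨_, i, p, hip⟩, ⟨u, u.range.mkQ,
    ⟨injective_of_horseshoe m.isShortExact.exact s'.isShortExact.injective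
      s''.isShortExact.injective hu₁ hu₂, exact_map_mkQ_range u, u.range.mkQ_surjective⟩,
    .prod_of_exact m.isShortExact.exact m.isShortExact.surjective s'.extendable s''.extendable
      hu₁ hu₂⟩⟩⟩

noncomputable def Extension.syzygy (s' : ProperSeq S B' P' A') (s'' : ProperSeq S B'' P'' A'')
    [Module.Projective S P''] : (m' : Extension S B' B'') × ProperSeq S m'.B (P' × P'') m.B :=
  Classical.choice (m.nonempty_syzygy s' s'')

noncomputable def Extension.cosyzygy (hm : ProjExtendable m.i) (s' : ProperSeq S A' P' B')
    (s'' : ProperSeq S A'' P'' B'') [Module.Projective S P'] :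
    (m' : Extension S B' B'') × ProperSeq S m.B (P' × P'') m'.B :=
  Classical.choice (m.nonempty_cosyzygy hm s' s'')

end Extension

section ProperChain

variable (S : Type u) [Ring S]

/-- The short exact pieces of a complete projective resolution. -/
structure ProperChain : Type (u + 1) where
  Z : ℤ → Type u
  P : ℤ → Type u
  [addCommGroupZ : ∀ n, AddCommGroup (Z n)]
  [moduleZ : ∀ n, Module S (Z n)]
  [addCommGroupP : ∀ n, AddCommGroup (P n)]
  [moduleP : ∀ n, Module S (P n)]
  [projective : ∀ n, Module.Projective S (P n)]
  seq : ∀ n, ProperSeq S (Z n) (P n) (Z (n + 1))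

attribute [instance] ProperChain.addCommGroupZ ProperChain.moduleZ ProperChain.addCommGroupP
  ProperChain.moduleP ProperChain.projective

variable {S}

namespace ProperChain

variable (c : ProperChain S)

def seqAt {m n : ℤ} (h : m + 1 = n) : ProperSeq S (c.Z m) (c.P m) (c.Z n) := by
  subst h
  exact c.seq m

def zEquiv {m n : ℤ} (h : m = n) : c.Z m ≃ₗ[S] c.Z n := by
  subst h
  exact LinearEquiv.refl S _

def shift (k : ℤ) : ProperChain S where
  Z n := c.Z (n + k)
  P n := c.P (n + k)
  seq n := c.seqAt (by ring)

def d (n : ℤ) : c.P n →ₗ[S] c.P (n + 1) := (c.seq (n + 1)).i ∘ₗ (c.seq n).p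

theorem range_d (n : ℤ) : (c.d n).range = (c.seq (n + 1)).i.range :=
  range_comp_of_range_eq_top _ (range_eq_top.2 (c.seq n).isShortExact.surjective)

theorem ker_d (n : ℤ) : (c.d n).ker = (c.seq n).p.ker :=
  ker_comp_of_ker_eq_bot _ (ker_eq_bot.2 (c.seq (n + 1)).isShortExact.injective)

theorem exists_comp_d_eq (Q : Type u) [AddCommGroup Q] [Module S Q] [Module.Projective S Q]
    (n : ℤ) (f : c.P (n + 1) →ₗ[S] Q) (hf : f ∘ₗ c.d n = 0) :
    ∃ g : c.P (n + 1 + 1) →ₗ[S] Q, g ∘ₗ c.d (n + 1) = f := by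
  have hfi : f ∘ₗ (c.seq (n + 1)).i = 0 := by
    rwa [d, ← comp_assoc, ← zero_comp (c.seq n).p,
      cancel_right (c.seq n).isShortExact.surjective] at hf
  have hker : (c.seq (n + 1)).p.ker ≤ f.ker := by
    rw [(c.seq (n + 1)).isShortExact.exact.linearMap_ker_eq]
    rintro _ ⟨x, rfl⟩
    exact LinearMap.congr_fun hfi x
  obtain ⟨f', hf'⟩ := exists_comp_eq_of_ker_le (c.seq (n + 1)).isShortExact.surjective hker
  obtain ⟨g, hg⟩ := (c.seq (n + 1 + 1)).extendable Q f'
  exact ⟨g, by rw [d, ← comp_assoc, hg, hf']⟩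

def toCompleteProjectiveResolution {X : Type u} [AddCommGroup X] [Module S X]
    (e : X ≃ₗ[S] c.Z 1) : CompleteProjectiveResolution S X where
  P := c.P
  projective := c.projective
  d := c.d
  exact n := by rw [range_d, ker_d, (c.seq (n + 1)).isShortExact.exact.linearMap_ker_eq]
  homExact Q _ _ _ := c.exists_comp_d_eq Q
  equiv := ⟨e ≪≫ₗ LinearEquiv.ofInjective _ (c.seq (0 + 1)).isShortExact.injective ≪≫ₗ
    LinearEquiv.ofEq _ _ (c.range_d 0).symm⟩

theorem isGorensteinProjective (n : ℤ) {X : Type u} [AddCommGroup X] [Module S X]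
    (e : X ≃ₗ[S] c.Z n) : IsGorensteinProjective S X :=
  ⟨(c.shift (n - 1)).toCompleteProjectiveResolution (e ≪≫ₗ c.zEquiv (by ring))⟩

theorem projExtendable_of_extension {A : Type u} [AddCommGroup A] [Module S A] (n : ℤ)
    (m : Extension S A (c.Z n)) : ProjExtendable m.i :=
  .of_presentation m.isShortExact (c.seqAt (sub_add_cancel n 1))

end ProperChain

end ProperChain

section Resolution

variable {S : Type u} [Ring S] {X : Type u} [AddCommGroup X] [Module S X]

def _root_.CompleteProjectiveResolution.properSeq (res : CompleteProjectiveResolution S X)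
    (n : ℤ) : ProperSeq S (res.d (n + 1)).range (res.P (n + 1 + 1)) (res.d (n + 1 + 1)).range where
  i := (res.d (n + 1)).range.subtype
  p := (res.d (n + 1 + 1)).rangeRestrict
  isShortExact :=
    ⟨Submodule.injective_subtype _,
      exact_iff.2 (by rw [ker_rangeRestrict, Submodule.range_subtype, res.exact (n + 1)]),
      surjective_rangeRestrict _⟩
  extendable Q _ _ _ φ := by
    have hφ : (φ ∘ₗ (res.d (n + 1)).rangeRestrict) ∘ₗ res.d n = 0 := by
      ext x
      have hx : res.d (n + 1) (res.d n x) = 0 := by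
        rw [← mem_ker, ← res.exact n]
        exact ⟨x, rfl⟩
      simp [show (res.d (n + 1)).rangeRestrict (res.d n x) = 0 from Subtype.ext hx]
    obtain ⟨g, hg⟩ := res.homExact Q inferInstance n _ hφ
    refine ⟨g, ?_⟩
    ext ⟨_, x, rfl⟩
    exact LinearMap.congr_fun hg x

def _root_.CompleteProjectiveResolution.toProperChain (res : CompleteProjectiveResolution S X) :
    ProperChain S where
  Z n := (res.d (n + 1)).range
  P n := res.P (n + 1 + 1)
  projective _ := res.projective _
  seq := res.properSeq

theorem _root_.IsGorensteinProjective.exists_properChain (h : IsGorensteinProjective S X) :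
    ∃ c : ProperChain S, Nonempty (X ≃ₗ[S] c.Z 0) := by
  obtain ⟨res⟩ := h
  obtain ⟨e⟩ := res.equiv
  refine ⟨res.toProperChain.shift (-1), ⟨?_⟩⟩
  change X ≃ₗ[S] (res.d (0 + -1 + 1)).range
  exact e

theorem _root_.IsGorensteinProjective.exists_isShortExact (h : IsGorensteinProjective S X) :
    ∃ (K P : Type u) (_ : AddCommGroup K) (_ : Module S K) (_ : AddCommGroup P) (_ : Module S P),
      IsGorensteinProjective S K ∧ Module.Projective S P ∧
      ∃ (i : K →ₗ[S] P) (p : P →ₗ[S] X), IsShortExact i p := by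
  obtain ⟨c, ⟨e⟩⟩ := h.exists_properChain
  have hs := (c.seq (-1)).isShortExact
  exact ⟨_, _, _, _, _, _, c.isGorensteinProjective (-1) (.refl S _), inferInstance, _,
    e.symm.toLinearMap ∘ₗ (c.seq (-1)).p,
    ⟨hs.injective, LinearEquiv.postcomp_exact_iff_exact.2 hs.exact,
      e.symm.surjective.comp hs.surjective⟩⟩

end Resolution

section ExtensionClosed

variable {S : Type u} [Ring S] (c' c'' : ProperChain S) (m : Extension S (c'.Z 0) (c''.Z 0))

noncomputable def horseshoeUp : ∀ n : ℕ, Extension S (c'.Z n) (c''.Z n)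
  | 0 => m
  | n + 1 => ((horseshoeUp n).cosyzygy (c''.projExtendable_of_extension n (horseshoeUp n))
      (c'.seq n) (c''.seq n)).1

noncomputable def horseshoeDown : ∀ n : ℕ, Extension S (c'.Z (.negSucc n)) (c''.Z (.negSucc n))
  | 0 => (m.syzygy (c'.seq (-1)) (c''.seq (-1))).1
  | n + 1 => ((horseshoeDown n).syzygy (c'.seq (.negSucc (n + 1))) (c''.seq (.negSucc (n + 1)))).1

noncomputable def horseshoeExtension : ∀ n : ℤ, Extension S (c'.Z n) (c''.Z n)
  | .ofNat n => horseshoeUp c' c'' m n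
  | .negSucc n => horseshoeDown c' c'' m n

noncomputable def horseshoe : ProperChain S where
  Z n := (horseshoeExtension c' c'' m n).B
  P n := c'.P n × c''.P n
  seq
    | .ofNat n => ((horseshoeUp c' c'' m n).cosyzygy
        (c''.projExtendable_of_extension n (horseshoeUp c' c'' m n)) (c'.seq n) (c''.seq n)).2
    | .negSucc 0 => (m.syzygy (c'.seq (-1)) (c''.seq (-1))).2
    | .negSucc (n + 1) => ((horseshoeDown c' c'' m n).syzygy (c'.seq (.negSucc (n + 1)))
        (c''.seq (.negSucc (n + 1)))).2

theorem _root_.IsGorensteinProjective.of_isShortExact {X' X X'' : Type u} [AddCommGroup X']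
    [Module S X'] [AddCommGroup X] [Module S X] [AddCommGroup X''] [Module S X'']
    {f : X' →ₗ[S] X} {g : X →ₗ[S] X''} (hfg : IsShortExact f g)
    (h' : IsGorensteinProjective S X') (h'' : IsGorensteinProjective S X'') :
    IsGorensteinProjective S X := by
  obtain ⟨c', ⟨e'⟩⟩ := h'.exists_properChain
  obtain ⟨c'', ⟨e''⟩⟩ := h''.exists_properChain
  exact (horseshoe c' c'' ⟨X, _, _, hfg.congr e' e''⟩).isGorensteinProjective 0 (.refl S X)

end ExtensionClosed

section Pullback

variable {S : Type*} [Ring S] {A K G₁ G₀ M P : Type*} [AddCommGroup A] [Module S A]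
  [AddCommGroup K] [Module S K] [AddCommGroup G₁] [Module S G₁] [AddCommGroup G₀] [Module S G₀]
  [AddCommGroup M] [Module S M] [AddCommGroup P] [Module S P] (g : G₁ →ₗ[S] G₀) (π : P →ₗ[S] G₀)

def pullback : Submodule S (G₁ × P) := (g ∘ₗ fst S G₁ P).eqLocus (π ∘ₗ snd S G₁ P)

@[simp]
theorem mem_pullback {x : G₁ × P} : x ∈ pullback g π ↔ g x.1 = π x.2 := mem_eqLocus

theorem exists_isShortExact_pullback_fst {ι : K →ₗ[S] P} (hιπ : IsShortExact ι π) :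
    ∃ i : K →ₗ[S] pullback g π, IsShortExact i (fst S G₁ P ∘ₗ (pullback g π).subtype) := by
  refine ⟨(inr S G₁ P ∘ₗ ι).codRestrict _ fun k => ?_,
    ⟨fun k₁ k₂ h => hιπ.injective congr(($h : G₁ × P).2), fun x => ⟨fun hx => ?_, ?_⟩, fun x => ?_⟩⟩
  · simp [hιπ.exact.apply_apply_eq_zero]
  · have hx₁ : (x : G₁ × P).1 = 0 := hx
    have hx₂ : g (x : G₁ × P).1 = π (x : G₁ × P).2 := x.2
    obtain ⟨k, hk⟩ := (hιπ.exact _).1 (by rw [← hx₂, hx₁, map_zero])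
    exact ⟨k, Subtype.ext (Prod.ext hx₁.symm hk)⟩
  · rintro ⟨k, rfl⟩
    rfl
  · obtain ⟨q, hq⟩ := hιπ.surjective (g x)
    exact ⟨⟨(x, q), by simp [hq]⟩, rfl⟩

theorem exists_injective_exact_pullback_snd {f : A →ₗ[S] G₁} (hf : Function.Injective f)
    (hfg : Function.Exact f g) : ∃ a : A →ₗ[S] pullback g π,
      Function.Injective a ∧ Function.Exact a (snd S G₁ P ∘ₗ (pullback g π).subtype) := by
  refine ⟨(inl S G₁ P ∘ₗ f).codRestrict _ fun x => ?_,
    fun x₁ x₂ h => hf congr(($h : G₁ × P).1), fun y => ⟨fun hy => ?_, ?_⟩⟩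
  · simp [hfg.apply_apply_eq_zero]
  · have hy₂ : (y : G₁ × P).2 = 0 := hy
    have hy₁ : g (y : G₁ × P).1 = π (y : G₁ × P).2 := y.2
    obtain ⟨x, hx⟩ := (hfg _).1 (by rw [hy₁, hy₂, map_zero])
    exact ⟨x, Subtype.ext (Prod.ext hx hy₂.symm)⟩
  · rintro ⟨x, rfl⟩
    rfl

theorem exact_pullback_snd {h : G₀ →ₗ[S] M} (hgh : Function.Exact g h) :
    Function.Exact (snd S G₁ P ∘ₗ (pullback g π).subtype) (h ∘ₗ π) := by
  intro q
  refine ⟨fun hq => ?_, ?_⟩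
  · obtain ⟨x, hx⟩ := (hgh (π q)).1 hq
    exact ⟨⟨(x, q), by simp [hx]⟩, rfl⟩
  · rintro ⟨y, rfl⟩
    have hy : g (y : G₁ × P).1 = π (y : G₁ × P).2 := y.2
    simp [← hy, hgh.apply_apply_eq_zero]

end Pullback

end GorensteinProjective

/-- Given an exact sequence `0 → A → G₁ → G₀ → M → 0` of left `R`-modules
with `G₀` and `G₁` Gorenstein projective, there exists an exact sequence
`0 → A → H → Q → M → 0` with `Q` projective and `H` Gorenstein projective. -/
theorem exists_exact_four_term_gorenstein_projective
    (R : Type u) [Ring R]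
    (A G₁ G₀ M : Type u) [AddCommGroup A] [Module R A] [AddCommGroup G₁] [Module R G₁]
    [AddCommGroup G₀] [Module R G₀] [AddCommGroup M] [Module R M]
    (f : A →ₗ[R] G₁) (g : G₁ →ₗ[R] G₀) (h : G₀ →ₗ[R] M)
    (hf : Function.Injective f) (hh : Function.Surjective h)
    (hfg : LinearMap.range f = LinearMap.ker g)
    (hgh : LinearMap.range g = LinearMap.ker h)
    (hG₁ : IsGorensteinProjective R G₁) (hG₀ : IsGorensteinProjective R G₀) :
    ∃ (H Q : Type u) (_ : AddCommGroup H) (_ : Module R H) (_ : AddCommGroup Q) (_ : Module R Q),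
      IsGorensteinProjective R H ∧ Module.Projective R Q ∧
      ∃ (a : A →ₗ[R] H) (b : H →ₗ[R] Q) (c : Q →ₗ[R] M),
        Function.Injective a ∧ Function.Surjective c ∧
        LinearMap.range a = LinearMap.ker b ∧ LinearMap.range b = LinearMap.ker c := by
  open GorensteinProjective in
  obtain ⟨K, P, _, _, _, _, hK, hP, ι, π, hιπ⟩ := hG₀.exists_isShortExact
  obtain ⟨i, hi⟩ := exists_isShortExact_pullback_fst g π hιπ
  obtain ⟨a, ha, hab⟩ := exists_injective_exact_pullback_snd g π hf (exact_iff.2 hfg.symm)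
  exact ⟨pullback g π, P, _, _, _, _, hK.of_isShortExact hi hG₁, hP, a, _, h ∘ₗ π, ha,
    hh.comp hιπ.surjective, (exact_iff.1 hab).symm,
    (exact_iff.1 (exact_pullback_snd g π (exact_iff.2 hgh.symm))).symm⟩
end
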